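/- arXiv:1409.5354 — 11 statements merged into one kernel-verified Lean document; each statement's English description precedes it below -/
import Mathlib

section
/- Let G be a complex Lie algebra with a decomposition G = G₊ ⊕ G₀ ⊕ G₋ into subalgebras, let η : G₊ → ℂ be a Lie algebra homomorphism (so η vanishes on [G₊,G₊]), and let V be a G-module generated by a vector v with x·v = η(x)v for all x ∈ G₊. If the adjoint action of G₊ on G/G₊ is locally nilpotent, then for every w ∈ V there exists s ∈ ℕ such that (x₁ − η(x₁))(x₂ − η(x₂))⋯(x_s − η(x_s))·w = 0 for all x₁,…,x_s ∈ G₊. -/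
/-- Apply the operators `ad x` for `x` running through a list of elements of `G₊`. -/
def applyAds {G : Type*} [LieRing G] [LieAlgebra ℂ G] (Gp : LieSubalgebra ℂ G)
    (xs : List Gp) (y : G) : G :=
  xs.foldr (fun x z => ⁅(x : G), z⁆) y

/-- Apply the operators `x − η(x)` for `x` running through a list of elements of `G₊`. -/
def applyWh {G V : Type*} [LieRing G] [LieAlgebra ℂ G]
    [AddCommGroup V] [Module ℂ V] [LieRingModule G V] [LieModule ℂ G V]
    (Gp : LieSubalgebra ℂ G) (η : Gp →ₗ[ℂ] ℂ) (xs : List Gp) (w : V) : V :=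
  xs.foldr (fun (x : Gp) (u : V) => ⁅(x : G), u⁆ - η x • u) w

/-!
The vectors `w` killed by all sufficiently long words `(x₁ - η x₁) ⋯ (x_s - η x_s)` form a
Lie submodule; it contains the generator `v`, so it is everything. Closure under `y ∈ G` is the
commutation rule `(x - η x) ρ(y) = ρ(y) (x - η x) + ρ(⁅x, y⁆)`: pushing a word of length `k + s`
through `ρ(y)` either leaves `s` letters to act on `w` or produces `k` iterated brackets
`ad(x_{i₁}) ⋯ ad(x_{i_k}) y`, which lie in `G₊`; induct on `k` and then on `s`.
-/

section Whittaker

variable {G V : Type*} [LieRing G] [LieAlgebra ℂ G]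
    [AddCommGroup V] [Module ℂ V] [LieRingModule G V] [LieModule ℂ G V]
    (Gp : LieSubalgebra ℂ G) (η : Gp →ₗ[ℂ] ℂ)

lemma applyAds_append_singleton (xs : List Gp) (x : Gp) (y : G) :
    applyAds Gp (xs ++ [x]) y = applyAds Gp xs ⁅(x : G), y⁆ := by
  simp [applyAds, List.foldr_append]

lemma applyWh_cons (x : Gp) (xs : List Gp) (w : V) :
    applyWh Gp η (x :: xs) w = ⁅(x : G), applyWh Gp η xs w⁆ - η x • applyWh Gp η xs w :=
  rfl

lemma applyWh_append (xs ys : List Gp) (w : V) :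
    applyWh Gp η (xs ++ ys) w = applyWh Gp η xs (applyWh Gp η ys w) := by
  simp [applyWh, List.foldr_append]

lemma applyWh_zero (xs : List Gp) : applyWh Gp η xs (0 : V) = 0 := by
  induction xs with
  | nil => rfl
  | cons x xs ih => rw [applyWh_cons, ih, lie_zero, smul_zero, sub_zero]

lemma applyWh_add (xs : List Gp) (w w' : V) :
    applyWh Gp η xs (w + w') = applyWh Gp η xs w + applyWh Gp η xs w' := by
  induction xs with
  | nil => rfl
  | cons x xs ih =>
    simp only [applyWh_cons]
    rw [ih, lie_add, smul_add]
    abel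

lemma applyWh_smul (xs : List Gp) (c : ℂ) (w : V) :
    applyWh Gp η xs (c • w) = c • applyWh Gp η xs w := by
  induction xs with
  | nil => rfl
  | cons x xs ih =>
    simp only [applyWh_cons]
    rw [ih, lie_smul, smul_sub, smul_comm c]

lemma applyWh_eq_zero_of_length_le {s : ℕ} {w : V}
    (hw : ∀ xs : List Gp, xs.length = s → applyWh Gp η xs w = 0)
    {xs : List Gp} (hs : s ≤ xs.length) : applyWh Gp η xs w = 0 := by
  rw [← List.take_append_drop (xs.length - s) xs, applyWh_append,
    hw _ (by simp; omega), applyWh_zero]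

lemma applyWh_singleton_lie (x : Gp) (y : G) (w : V) :
    applyWh Gp η [x] ⁅y, w⁆ = ⁅y, applyWh Gp η [x] w⁆ + ⁅⁅(x : G), y⁆, w⁆ := by
  change ⁅(x : G), ⁅y, w⁆⁆ - η x • ⁅y, w⁆ = ⁅y, ⁅(x : G), w⁆ - η x • w⁆ + ⁅⁅(x : G), y⁆, w⁆
  rw [leibniz_lie, lie_sub, lie_smul]
  abel

lemma applyWh_lie_eq_zero {k s : ℕ} {y : G} {w : V}
    (hy : ∀ xs : List Gp, xs.length = k → applyAds Gp xs y ∈ Gp)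
    (hw : ∀ xs : List Gp, xs.length = s → applyWh Gp η xs w = 0) :
    ∀ xs : List Gp, xs.length = k + s → applyWh Gp η xs ⁅y, w⁆ = 0 := by
  induction k generalizing y s w with
  | zero =>
    intro xs hxs
    let y' : Gp := ⟨y, hy [] rfl⟩
    have hy' : ⁅y, w⁆ = applyWh Gp η [y'] w + η y' • w := (sub_add_cancel _ _).symm
    rw [hy', applyWh_add, applyWh_smul, ← applyWh_append, hw xs (by omega), smul_zero,
      add_zero, applyWh_eq_zero_of_length_le Gp η hw (by simp; omega)]
  | succ k ihk =>
    induction s generalizing w with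
    | zero =>
      intro xs _
      rw [show w = 0 from hw [] rfl, lie_zero, applyWh_zero]
    | succ s ihs =>
      intro xs hxs
      obtain ⟨ys, x, rfl⟩ : ∃ ys x, xs = ys ++ [x] :=
        (List.eq_nil_or_concat' xs).resolve_left (by rintro rfl; simp at hxs)
      have hys : ys.length = k + 1 + s := by simp at hxs; omega
      have hxw : ∀ zs : List Gp, zs.length = s → applyWh Gp η zs (applyWh Gp η [x] w) = 0 :=
        fun zs hzs => by rw [← applyWh_append]; exact hw _ (by simp [hzs])
      have hxy : ∀ zs : List Gp, zs.length = k → applyAds Gp zs ⁅(x : G), y⁆ ∈ Gp :=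
        fun zs hzs => by rw [← applyAds_append_singleton]; exact hy _ (by simp [hzs])
      rw [applyWh_append, applyWh_singleton_lie, applyWh_add, ihs hxw ys hys,
        ihk hxy hw ys (by omega), add_zero]

def whittakerNilpotentSubmodule
    (hnil : ∀ y : G, ∃ s : ℕ, ∀ xs : List Gp, xs.length = s → applyAds Gp xs y ∈ Gp) :
    LieSubmodule ℂ G V where
  carrier := {w | ∃ s : ℕ, ∀ xs : List Gp, xs.length = s → applyWh Gp η xs w = 0}
  add_mem' := by
    rintro a b ⟨s, hs⟩ ⟨t, ht⟩
    refine ⟨max s t, fun xs hxs => ?_⟩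
    rw [applyWh_add, applyWh_eq_zero_of_length_le Gp η hs (by omega),
      applyWh_eq_zero_of_length_le Gp η ht (by omega), add_zero]
  zero_mem' := ⟨0, fun xs _ => applyWh_zero Gp η xs⟩
  smul_mem' := by
    rintro c a ⟨s, hs⟩
    exact ⟨s, fun xs hxs => by rw [applyWh_smul, hs xs hxs, smul_zero]⟩
  lie_mem := by
    rintro y a ⟨s, hs⟩
    obtain ⟨k, hk⟩ := hnil y
    exact ⟨k + s, applyWh_lie_eq_zero Gp η hk hs⟩

end Whittaker

theorem stmt0_general {G V : Type*} [LieRing G] [LieAlgebra ℂ G]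
    [AddCommGroup V] [Module ℂ V] [LieRingModule G V] [LieModule ℂ G V]
    (Gp : LieSubalgebra ℂ G)
    (η : Gp →ₗ[ℂ] ℂ)
    (v : V) (hv : ∀ x : Gp, ⁅(x : G), v⁆ = η x • v)
    (hgen : LieSubmodule.lieSpan ℂ G {v} = ⊤)
    (hnil : ∀ y : G, ∃ s : ℕ, ∀ xs : List Gp, xs.length = s → applyAds Gp xs y ∈ Gp)
    (w : V) :
    ∃ s : ℕ, ∀ xs : List Gp, xs.length = s → applyWh Gp η xs w = 0 := by
  have hv_mem : v ∈ whittakerNilpotentSubmodule Gp η hnil := by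
    refine ⟨1, fun xs hxs => ?_⟩
    obtain ⟨x, rfl⟩ := List.length_eq_one_iff.mp hxs
    exact sub_eq_zero.mpr (hv x)
  have hspan : LieSubmodule.lieSpan ℂ G {v} ≤ whittakerNilpotentSubmodule Gp η hnil :=
    LieSubmodule.lieSpan_le.mpr (Set.singleton_subset_iff.mpr hv_mem)
  exact hspan (hgen ▸ LieSubmodule.mem_top w)

/-- local nilpotency of the operators `x − η(x)`, `x ∈ G₊`,
on a Whittaker module. -/
theorem stmt0 {G V : Type*} [LieRing G] [LieAlgebra ℂ G]
    [AddCommGroup V] [Module ℂ V] [LieRingModule G V] [LieModule ℂ G V]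
    (Gp G0 Gm : LieSubalgebra ℂ G)
    (hdecomp : ∀ g : G, ∃! t : Gp × G0 × Gm, g = (t.1 : G) + (t.2.1 : G) + (t.2.2 : G))
    (η : Gp →ₗ[ℂ] ℂ) (hη : ∀ x y : Gp, η ⁅x, y⁆ = 0)
    (v : V) (hv0 : v ≠ 0) (hv : ∀ x : Gp, ⁅(x : G), v⁆ = η x • v)
    (hgen : LieSubmodule.lieSpan ℂ G {v} = ⊤)
    (hnil : ∀ y : G, ∃ s : ℕ, ∀ xs : List Gp, xs.length = s → applyAds Gp xs y ∈ Gp)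
    (w : V) :
    ∃ s : ℕ, ∀ xs : List Gp, xs.length = s → applyWh Gp η xs w = 0 :=
  stmt0_general Gp η v hv hgen hnil w
end

section
/- Let G be a complex Lie algebra with decomposition G = G₊ ⊕ G₀ ⊕ G₋, η : G₊ → ℂ a Lie algebra homomorphism, and V a G-module generated by a Whittaker vector of type η. Assume G₊ acts locally nilpotently on G/G₊. Then every nonzero G-submodule W of V contains a Whittaker vector of type η, i.e., a nonzero w' ∈ W with x·w' = η(x)w' for all x ∈ G₊. -/
/-!
Write `T x = x - η x` for `x ∈ G₊`, and filter `V` by the spans `F n` of the brackets of fewer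
than `n` elements of `G` applied to `v`. Each `F n` is `G₊`-stable, and by the Leibniz rule
`T x ⁅g, u⁆ = ⁅⁅x, g⁆, u⁆ + ⁅g, T x u⁆` together with the local nilpotence of `ad G₊` on `G / G₊`,
every long enough word in the `T x` maps `F (n + 1)` into `F n`. Starting from a nonzero `w ∈ W`,
keep applying operators `T x` that do not kill the current vector: this descends the filtration
down to `F 0 = 0`, so it stops at a nonzero vector of `W` killed by every `T x`.
-/

namespace Module.End

variable {ι R M : Type*} [Semiring R] [AddCommMonoid M] [Module R M] (T : ι → Module.End R M)

/-- `word T [i₁, …, iₖ] = T iₖ * ⋯ * T i₁`: the head of the list acts first. -/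
def word : List ι → Module.End R M
  | [] => 1
  | i :: is => word is * T i

@[simp]
lemma word_nil_apply (m : M) : word T [] m = m := rfl

lemma word_cons_apply (i : ι) (is : List ι) (m : M) : word T (i :: is) m = word T is (T i m) :=
  rfl

lemma word_apply_mem {P : Submodule R M} (hP : ∀ i, Set.MapsTo (T i) P P) (is : List ι) {m : M}
    (hm : m ∈ P) : word T is m ∈ P := by
  induction is generalizing m with
  | nil => exact hm
  | cons i is ih => exact ih (hP i hm)

def eventuallyIn (P : Submodule R M) : Submodule R M where
  carrier := {m | ∃ N, ∀ is : List ι, N ≤ is.length → word T is m ∈ P}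
  zero_mem' := ⟨0, fun is _ => by simp⟩
  add_mem' := by
    rintro a b ⟨Na, ha⟩ ⟨Nb, hb⟩
    exact ⟨max Na Nb, fun is h => by
      rw [map_add]
      exact add_mem (ha is (le_of_max_le_left h)) (hb is (le_of_max_le_right h))⟩
  smul_mem' := by
    rintro c m ⟨N, hm⟩
    exact ⟨N, fun is h => by rw [map_smul]; exact P.smul_mem c (hm is h)⟩

theorem exists_forall_apply_eq_zero_or_mem {W : Set M} (hW : ∀ i, Set.MapsTo (T i) W W)
    {P : Submodule R M} {w : M} (hw : w ∈ W) (hw0 : w ≠ 0) (hwP : w ∈ eventuallyIn T P) :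
    (∃ w' ∈ W, w' ≠ 0 ∧ ∀ i, T i w' = 0) ∨ ∃ w' ∈ W, w' ≠ 0 ∧ w' ∈ P := by
  obtain ⟨N, hN⟩ := hwP
  induction N generalizing w with
  | zero => exact .inr ⟨w, hw, hw0, hN [] le_rfl⟩
  | succ N ih =>
    by_cases hker : ∀ i, T i w = 0
    · exact .inl ⟨w, hw, hw0, hker⟩
    obtain ⟨i, hi⟩ := not_forall.mp hker
    exact ih (hW i hw) hi fun is h => hN (i :: is) (by simp only [List.length_cons]; omega)

end Module.End

open Module.End

section LieWordFiltration

variable (R : Type*) {G V : Type*} [CommRing R] [LieRing G] [AddCommGroup V] [Module R V]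
  [LieRingModule G V]

variable (G) in
/-- `lieWordFiltration R G v (n + 1)` is spanned by the brackets `⁅g₁, ⁅g₂, …, ⁅gₖ, v⁆…⁆⁆` with
`k ≤ n`. -/
def lieWordFiltration (v : V) : ℕ → Submodule R V
  | 0 => ⊥
  | n + 1 => Submodule.span R (insert v {w | ∃ g : G, ∃ u ∈ lieWordFiltration v n, ⁅g, u⁆ = w})

lemma lie_mem_lieWordFiltration_succ {v u : V} {n : ℕ} (g : G)
    (hu : u ∈ lieWordFiltration R G v n) : ⁅g, u⁆ ∈ lieWordFiltration R G v (n + 1) :=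
  Submodule.subset_span (Set.mem_insert_of_mem _ ⟨g, u, hu, rfl⟩)

lemma lieWordFiltration_mono (v : V) : Monotone (lieWordFiltration R G v) := by
  refine monotone_nat_of_le_succ fun n => ?_
  induction n with
  | zero => exact bot_le
  | succ n ih => exact Submodule.span_mono (Set.insert_subset_insert fun w ⟨g, u, hu, h⟩ =>
      ⟨g, u, ih hu, h⟩)

lemma exists_mem_lieWordFiltration {v w : V} (hw : w ∈ LieSubmodule.lieSpan R G {v}) :
    ∃ n, w ∈ lieWordFiltration R G v n := by
  induction hw using LieSubmodule.lieSpan_induction with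
  | mem w hw => exact ⟨1, Submodule.subset_span (Set.mem_insert_iff.mpr (.inl hw))⟩
  | zero => exact ⟨0, zero_mem _⟩
  | add a b _ _ ha hb =>
    obtain ⟨m, ha⟩ := ha
    obtain ⟨n, hb⟩ := hb
    exact ⟨max m n, add_mem (lieWordFiltration_mono R v (le_max_left m n) ha)
      (lieWordFiltration_mono R v (le_max_right m n) hb)⟩
  | smul c w _ hw =>
    obtain ⟨n, hw⟩ := hw
    exact ⟨n, Submodule.smul_mem _ c hw⟩
  | lie g w _ hw =>
    obtain ⟨n, hw⟩ := hw
    exact ⟨n + 1, lie_mem_lieWordFiltration_succ R g hw⟩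

variable [LieAlgebra R G] [LieModule R G V]

lemma lie_mem_lieWordFiltration {v : V} {y : G} (hy : ⁅y, v⁆ ∈ R ∙ v) (n : ℕ) {u : V}
    (hu : u ∈ lieWordFiltration R G v n) : ⁅y, u⁆ ∈ lieWordFiltration R G v n := by
  induction n generalizing u with
  | zero => simp_all [lieWordFiltration]
  | succ n ih =>
    induction hu using Submodule.span_induction with
    | mem w hw =>
      obtain rfl | ⟨g, u, hu, rfl⟩ := hw
      · exact Submodule.span_mono (by simp) hy
      · rw [leibniz_lie]
        exact add_mem (lie_mem_lieWordFiltration_succ R _ hu)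
          (lie_mem_lieWordFiltration_succ R g (ih hu))
    | zero => simp
    | add a b _ _ ha hb => rw [lie_add]; exact add_mem ha hb
    | smul c w _ hw => rw [lie_smul]; exact Submodule.smul_mem _ c hw

end LieWordFiltration

section Whittaker

variable {G V : Type*} [LieRing G] [LieAlgebra ℂ G]
  [AddCommGroup V] [Module ℂ V] [LieRingModule G V] [LieModule ℂ G V]
  {Gp : LieSubalgebra ℂ G} (η : Gp →ₗ[ℂ] ℂ)

/-- Whittaker vectors of type `η` are the common zeros of these operators. -/
def whittakerShift (x : Gp) : Module.End ℂ V :=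
  LieModule.toEnd ℂ G V x - η x • 1

lemma whittakerShift_apply (x : Gp) (w : V) : whittakerShift η x w = ⁅(x : G), w⁆ - η x • w :=
  rfl

lemma whittakerShift_lie (x : Gp) (g : G) (u : V) :
    whittakerShift η x ⁅g, u⁆ = ⁅⁅(x : G), g⁆, u⁆ + ⁅g, whittakerShift η x u⁆ := by
  rw [whittakerShift_apply, whittakerShift_apply, lie_sub, lie_smul, leibniz_lie]
  abel

lemma whittakerShift_mapsTo {Q : Submodule ℂ V} (hQ : ∀ y ∈ Gp, ∀ q ∈ Q, ⁅y, q⁆ ∈ Q) (x : Gp) :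
    Set.MapsTo (whittakerShift η x) (Q : Set V) Q := fun q hq =>
  Q.sub_mem (hQ x x.2 q hq) (Q.smul_mem _ hq)

/-- By `whittakerShift_lie`, each letter of the word either feeds `ad` on `g` (after `s` of them
`g` lands in `Gp`) or acts on `u` (after `M` of them `u` lands in `P`). -/
theorem word_whittakerShift_lie_mem {Q : Submodule ℂ V} {P : Set V}
    (hQ : ∀ y ∈ Gp, ∀ q ∈ Q, ⁅y, q⁆ ∈ Q) (hPQ : ∀ g : G, ∀ p ∈ P, ⁅g, p⁆ ∈ Q)
    (xs : List Gp) {s M : ℕ} {g : G} {u : V} (hu : u ∈ Q)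
    (hg : ∀ S : List Gp, S.length = s → applyAds Gp S g ∈ Gp)
    (huP : ∀ S : List Gp, M ≤ S.length → word (whittakerShift η) S u ∈ P)
    (hlen : s + M ≤ xs.length) : word (whittakerShift η) xs ⁅g, u⁆ ∈ Q := by
  have hword := word_apply_mem _ (whittakerShift_mapsTo η hQ)
  induction xs generalizing s M g u with
  | nil =>
    obtain rfl : s = 0 := by simp only [List.length_nil] at hlen; omega
    exact hQ g (hg [] rfl) u hu
  | cons x xs ih =>
    obtain rfl | hs := Nat.eq_zero_or_pos s
    · exact hword _ (hQ g (hg [] rfl) u hu)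
    obtain rfl | hM := Nat.eq_zero_or_pos M
    · exact hword _ (hPQ g u (huP [] le_rfl))
    simp only [List.length_cons] at hlen
    rw [word_cons_apply, whittakerShift_lie, map_add]
    refine add_mem (ih hu (s := s - 1) (fun S hS => ?_) huP (by omega))
      (ih (whittakerShift_mapsTo η hQ x hu) hg (M := M - 1) (fun S hS => ?_) (by omega))
    · have hSx : (S ++ [x]).length = s := by
        simp only [List.length_append, List.length_singleton]; omega
      simpa [applyAds] using hg (S ++ [x]) hSx
    · exact huP (x :: S) (by simp only [List.length_cons]; omega)

variable {η} {v : V} (hv : ∀ x : Gp, ⁅(x : G), v⁆ = η x • v)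
include hv

lemma lie_mem_lieWordFiltration_of_mem_lieSubalgebra {y : G} (hy : y ∈ Gp) (n : ℕ) {u : V}
    (hu : u ∈ lieWordFiltration ℂ G v n) : ⁅y, u⁆ ∈ lieWordFiltration ℂ G v n :=
  lie_mem_lieWordFiltration ℂ (Submodule.mem_span_singleton.mpr ⟨η ⟨y, hy⟩, (hv _).symm⟩) n hu

theorem lieWordFiltration_succ_le_eventuallyIn
    (hnil : ∀ y : G, ∃ s : ℕ, ∀ xs : List Gp, xs.length = s → applyAds Gp xs y ∈ Gp) (n : ℕ) :
    lieWordFiltration ℂ G v (n + 1) ≤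
      eventuallyIn (whittakerShift η) (lieWordFiltration ℂ G v n) := by
  refine Submodule.span_le.mpr (Set.insert_subset ⟨1, fun xs hxs => ?_⟩ ?_)
  · obtain ⟨x, xs, rfl⟩ := List.exists_cons_of_length_pos hxs
    rw [word_cons_apply, whittakerShift_apply, hv, sub_self, map_zero]
    exact zero_mem _
  rintro _ ⟨g, u, hu, rfl⟩
  cases n with
  | zero =>
    rw [(Submodule.mem_bot ℂ).mp hu, lie_zero]
    exact zero_mem _
  | succ n =>
    obtain ⟨M, hM⟩ := lieWordFiltration_succ_le_eventuallyIn hnil n hu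
    obtain ⟨s, hs⟩ := hnil g
    exact ⟨s + M, fun xs hxs => word_whittakerShift_lie_mem η
      (fun y hy _ => lie_mem_lieWordFiltration_of_mem_lieSubalgebra hv hy _)
      (fun g _ => lie_mem_lieWordFiltration_succ ℂ g) xs hu hs hM hxs⟩

theorem exists_whittakerShift_eq_zero_of_mem_lieWordFiltration
    (hnil : ∀ y : G, ∃ s : ℕ, ∀ xs : List Gp, xs.length = s → applyAds Gp xs y ∈ Gp)
    (W : LieSubmodule ℂ G V) (n : ℕ) {w : V} (hw : w ∈ W) (hw0 : w ≠ 0)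
    (hwn : w ∈ lieWordFiltration ℂ G v n) :
    ∃ w' ∈ W, w' ≠ 0 ∧ ∀ x : Gp, whittakerShift η x w' = 0 := by
  induction n generalizing w with
  | zero => exact absurd ((Submodule.mem_bot ℂ).mp hwn) hw0
  | succ n ih =>
    obtain h | ⟨w', hw', hw'0, hw'n⟩ := exists_forall_apply_eq_zero_or_mem _
      (whittakerShift_mapsTo η (Q := W.toSubmodule) fun _ _ _ hq => W.lie_mem hq) hw hw0
      (lieWordFiltration_succ_le_eventuallyIn hv hnil n hwn)
    · exact h
    · exact ih hw' hw'0 hw'n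

end Whittaker

theorem stmt1_general {G V : Type*} [LieRing G] [LieAlgebra ℂ G]
    [AddCommGroup V] [Module ℂ V] [LieRingModule G V] [LieModule ℂ G V]
    (Gp : LieSubalgebra ℂ G)
    (η : Gp →ₗ[ℂ] ℂ)
    (v : V) (hv : ∀ x : Gp, ⁅(x : G), v⁆ = η x • v)
    (hgen : LieSubmodule.lieSpan ℂ G {v} = ⊤)
    (hnil : ∀ y : G, ∃ s : ℕ, ∀ xs : List Gp, xs.length = s → applyAds Gp xs y ∈ Gp)
    (W : LieSubmodule ℂ G V) (hW : W ≠ ⊥) :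
    ∃ w' ∈ W, w' ≠ 0 ∧ ∀ x : Gp, ⁅(x : G), w'⁆ = η x • w' := by
  obtain ⟨w, hw, hw0⟩ :=
    Submodule.exists_mem_ne_zero_of_ne_bot (mt (LieSubmodule.toSubmodule_eq_bot W).mp hW)
  obtain ⟨n, hwn⟩ := exists_mem_lieWordFiltration ℂ (hgen ▸ LieSubmodule.mem_top w)
  obtain ⟨w', hw', hw'0, hker⟩ :=
    exists_whittakerShift_eq_zero_of_mem_lieWordFiltration hv hnil W n hw hw0 hwn
  exact ⟨w', hw', hw'0, fun x => sub_eq_zero.mp (hker x)⟩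

/-- every nonzero submodule of a Whittaker module contains a Whittaker
vector of the same type. -/
theorem stmt1 {G V : Type*} [LieRing G] [LieAlgebra ℂ G]
    [AddCommGroup V] [Module ℂ V] [LieRingModule G V] [LieModule ℂ G V]
    (Gp G0 Gm : LieSubalgebra ℂ G)
    (hdecomp : ∀ g : G, ∃! t : Gp × G0 × Gm, g = (t.1 : G) + (t.2.1 : G) + (t.2.2 : G))
    (η : Gp →ₗ[ℂ] ℂ) (hη : ∀ x y : Gp, η ⁅x, y⁆ = 0)
    (v : V) (hv0 : v ≠ 0) (hv : ∀ x : Gp, ⁅(x : G), v⁆ = η x • v)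
    (hgen : LieSubmodule.lieSpan ℂ G {v} = ⊤)
    (hnil : ∀ y : G, ∃ s : ℕ, ∀ xs : List Gp, xs.length = s → applyAds Gp xs y ∈ Gp)
    (W : LieSubmodule ℂ G V) (hW : W ≠ ⊥) :
    ∃ w' ∈ W, w' ≠ 0 ∧ ∀ x : Gp, ⁅(x : G), w'⁆ = η x • w' :=
  stmt1_general Gp η v hv hgen hnil W hW
end

section
/- Let G be a complex Lie algebra with decomposition G = G₊ ⊕ G₀ ⊕ G₋, η : G₊ → ℂ a Lie algebra homomorphism, and V a G-module generated by a Whittaker vector v of type η. Assume G₊ acts locally nilpotently on G/G₊. If the space of Whittaker vectors of type η in V is one-dimensional, then V is an irreducible G-module. -/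
set_option linter.unusedSectionVars false

section Aux

variable {G V : Type*} [LieRing G] [LieAlgebra ℂ G]
    [AddCommGroup V] [Module ℂ V] [LieRingModule G V] [LieModule ℂ G V]
    (Gp : LieSubalgebra ℂ G) (η : Gp →ₗ[ℂ] ℂ)

/-- Fold of twisted operators `u ↦ ⁅x,u⁆ - η x • u`. -/
def Tfold (xs : List Gp) (w : V) : V :=
  xs.foldr (fun (x : Gp) (u : V) => ⁅(x : G), u⁆ - η x • u) w

@[simp] lemma Tfold_nil (w : V) : Tfold Gp η [] w = w := rfl

lemma Tfold_cons (x : Gp) (xs : List Gp) (w : V) :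
    Tfold Gp η (x :: xs) w = ⁅(x : G), Tfold Gp η xs w⁆ - η x • Tfold Gp η xs w := rfl

lemma Tfold_append (xs ys : List Gp) (w : V) :
    Tfold Gp η (xs ++ ys) w = Tfold Gp η xs (Tfold Gp η ys w) := by
  simp [Tfold, List.foldr_append]

@[simp] lemma Tfold_zero (xs : List Gp) : Tfold Gp η xs (0 : V) = 0 := by
  induction xs with
  | nil => rfl
  | cons x xs ih => simp [Tfold_cons, ih]

lemma Tfold_add (xs : List Gp) (a b : V) :
    Tfold Gp η xs (a + b) = Tfold Gp η xs a + Tfold Gp η xs b := by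
  induction xs with
  | nil => rfl
  | cons x xs ih => simp [Tfold_cons, ih]; abel

lemma Tfold_smul (xs : List Gp) (c : ℂ) (a : V) :
    Tfold Gp η xs (c • a) = c • Tfold Gp η xs a := by
  induction xs with
  | nil => rfl
  | cons x xs ih => simp [Tfold_cons, ih, smul_sub, smul_comm c]

lemma applyAds_append (xs ys : List Gp) (y : G) :
    applyAds Gp (xs ++ ys) y = applyAds Gp xs (applyAds Gp ys y) := by
  simp [applyAds, List.foldr_append]

/-- The recursion bound. -/
def gBound : ℕ → ℕ → ℕ
  | 0, N => N
  | _ + 1, 0 => 0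
  | s + 1, N + 1 => 1 + max (gBound s (N + 1)) (gBound (s + 1) N)

lemma key (s : ℕ) : ∀ (N : ℕ) (y : G) (w : V),
    (∀ xs : List Gp, xs.length = s → applyAds Gp xs y ∈ Gp) →
    (∀ xs : List Gp, N ≤ xs.length → Tfold Gp η xs w = 0) →
    ∀ xs : List Gp, gBound s N ≤ xs.length → Tfold Gp η xs ⁅y, w⁆ = 0 := by
  induction s with
  | zero =>
    intro N y w hy hw xs hxs
    have hxs' : N ≤ xs.length := by simpa [gBound] using hxs
    have hyp : y ∈ Gp := by simpa [applyAds] using hy [] rfl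
    have hd : ⁅y, w⁆ = Tfold Gp η [⟨y, hyp⟩] w + η ⟨y, hyp⟩ • w := by
      simp [Tfold_cons]
    have e1 : Tfold Gp η (xs ++ [⟨y, hyp⟩]) w = 0 := hw _ (by simp; omega)
    rw [hd, Tfold_add, Tfold_smul, ← Tfold_append, e1, hw xs hxs', smul_zero, add_zero]
  | succ s ihs =>
    intro N
    induction N with
    | zero =>
      intro y w hy hw xs hxs
      have hw0 : w = 0 := by simpa using hw [] (by simp)
      simp [hw0]
    | succ N ihN =>
      intro y w hy hw xs hxs
      have hxs2 : 1 + max (gBound s (N + 1)) (gBound (s + 1) N) ≤ xs.length := by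
        simpa [gBound] using hxs
      rcases List.eq_nil_or_concat xs with rfl | ⟨ys, x, rfl⟩
      · simp at hxs2
      · have hlen : max (gBound s (N + 1)) (gBound (s + 1) N) ≤ ys.length := by
          simp at hxs2 ⊢; omega
        have hsplit : ⁅(x : G), ⁅y, w⁆⁆ - η x • ⁅y, w⁆ =
            ⁅⁅(x : G), y⁆, w⁆ + ⁅y, ⁅(x : G), w⁆ - η x • w⁆ := by
          rw [lie_sub, lie_smul, leibniz_lie]; abel
        have hstep : Tfold Gp η (ys ++ [x]) ⁅y, w⁆ =
            Tfold Gp η ys (⁅⁅(x : G), y⁆, w⁆ + ⁅y, ⁅(x : G), w⁆ - η x • w⁆) := by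
          rw [Tfold_append,
            show Tfold Gp η [x] ⁅y, w⁆ = ⁅(x : G), ⁅y, w⁆⁆ - η x • ⁅y, w⁆ from rfl, hsplit]
        rw [List.concat_eq_append, hstep, Tfold_add]
        have h1 : Tfold Gp η ys ⁅⁅(x : G), y⁆, w⁆ = 0 := by
          refine ihs (N + 1) ⁅(x : G), y⁆ w ?_ hw ys (le_trans (le_max_left _ _) hlen)
          intro zs hzs
          have := hy (zs ++ [x]) (by simp [hzs])
          simpa [applyAds_append, applyAds] using this
        have h2 : Tfold Gp η ys ⁅y, ⁅(x : G), w⁆ - η x • w⁆ = 0 := by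
          refine ihN y (⁅(x : G), w⁆ - η x • w) hy ?_ ys (le_trans (le_max_right _ _) hlen)
          intro zs hzs
          have heq : Tfold Gp η zs (⁅(x : G), w⁆ - η x • w) = Tfold Gp η (zs ++ [x]) w := by
            rw [Tfold_append]; rfl
          rw [heq]
          exact hw _ (by simp; omega)
        rw [h1, h2, add_zero]

end Aux

/-- if the space of Whittaker vectors of type `η` in the Whittaker module `V`
is one-dimensional, then `V` is irreducible. -/
theorem stmt2 {G V : Type*} [LieRing G] [LieAlgebra ℂ G]
    [AddCommGroup V] [Module ℂ V] [LieRingModule G V] [LieModule ℂ G V]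
    (Gp G0 Gm : LieSubalgebra ℂ G)
    (hdecomp : ∀ g : G, ∃! t : Gp × G0 × Gm, g = (t.1 : G) + (t.2.1 : G) + (t.2.2 : G))
    (η : Gp →ₗ[ℂ] ℂ) (hη : ∀ x y : Gp, η ⁅x, y⁆ = 0)
    (v : V) (hv0 : v ≠ 0) (hv : ∀ x : Gp, ⁅(x : G), v⁆ = η x • v)
    (hgen : LieSubmodule.lieSpan ℂ G {v} = ⊤)
    (hnil : ∀ y : G, ∃ s : ℕ, ∀ xs : List Gp, xs.length = s → applyAds Gp xs y ∈ Gp)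
    (h1dim : ∀ u : V, (∀ x : Gp, ⁅(x : G), u⁆ = η x • u) → ∃ c : ℂ, u = c • v) :
    ∀ W : LieSubmodule ℂ G V, W = ⊥ ∨ W = ⊤ := by
  -- The submodule of vectors killed by all long twisted folds.
  let S : LieSubmodule ℂ G V :=
    { carrier := {w | ∃ N : ℕ, ∀ xs : List Gp, N ≤ xs.length → Tfold Gp η xs w = 0}
      add_mem' := by
        rintro a b ⟨Na, ha⟩ ⟨Nb, hb⟩
        exact ⟨max Na Nb, fun xs hxs => by
          rw [Tfold_add, ha xs (le_trans (le_max_left _ _) hxs),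
            hb xs (le_trans (le_max_right _ _) hxs), add_zero]⟩
      zero_mem' := ⟨0, fun xs _ => Tfold_zero Gp η xs⟩
      smul_mem' := by
        rintro c a ⟨N, ha⟩
        exact ⟨N, fun xs hxs => by rw [Tfold_smul, ha xs hxs, smul_zero]⟩
      lie_mem := by
        rintro y a ⟨N, ha⟩
        obtain ⟨s, hs⟩ := hnil y
        exact ⟨gBound s N, fun xs hxs => key Gp η s N y a hs ha xs hxs⟩ }
  have hvS : v ∈ S := by
    refine ⟨1, fun xs hxs => ?_⟩
    rcases List.eq_nil_or_concat xs with rfl | ⟨ys, x, rfl⟩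
    · simp at hxs
    · rw [List.concat_eq_append, Tfold_append]
      have h0 : Tfold Gp η [x] v = 0 := by simp [Tfold_cons, hv x]
      rw [h0, Tfold_zero]
  have hPall : ∀ w : V,
      ∃ N : ℕ, ∀ xs : List Gp, N ≤ xs.length → Tfold Gp η xs w = 0 := by
    intro w
    have hST : S = ⊤ := by
      rw [eq_top_iff, ← hgen]
      exact LieSubmodule.lieSpan_le.2 (by simpa using hvS)
    have : w ∈ S := hST ▸ trivial
    exact this
  intro W
  by_cases hW : W = ⊥
  · exact Or.inl hW
  right
  obtain ⟨w, hwW, hw0⟩ : ∃ w ∈ W, w ≠ 0 := by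
    by_contra h
    push_neg at h
    exact hW ((LieSubmodule.eq_bot_iff W).2 h)
  have main : ∀ N : ℕ, ∀ w : V, w ∈ W → w ≠ 0 →
      (∀ xs : List Gp, N ≤ xs.length → Tfold Gp η xs w = 0) → v ∈ W := by
    intro N
    induction N with
    | zero =>
      intro w hwW hw0 hbound
      exact absurd (by simpa using hbound [] (by simp)) hw0
    | succ N ih =>
      intro w hwW hw0 hbound
      by_cases hwh : ∀ x : Gp, ⁅(x : G), w⁆ - η x • w = 0
      · obtain ⟨c, hc⟩ := h1dim w (fun x => by have := hwh x; rwa [sub_eq_zero] at this)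
        have hcne : c ≠ 0 := fun h => hw0 (by simp [hc, h])
        have hvw : v = c⁻¹ • w := by rw [hc, smul_smul, inv_mul_cancel₀ hcne, one_smul]
        rw [hvw]
        exact W.smul_mem _ hwW
      · push_neg at hwh
        obtain ⟨x, hx⟩ := hwh
        refine ih (⁅(x : G), w⁆ - η x • w) ?_ hx ?_
        · exact W.sub_mem (W.lie_mem hwW) (W.smul_mem _ hwW)
        · intro xs hxs
          have heq : Tfold Gp η xs (⁅(x : G), w⁆ - η x • w) = Tfold Gp η (xs ++ [x]) w := by
            rw [Tfold_append]; rfl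
          rw [heq]
          exact hbound _ (by simp; omega)
  obtain ⟨N, hN⟩ := hPall w
  have hvW : v ∈ W := main N w hwW hw0 hN
  rw [eq_top_iff, ← hgen]
  exact LieSubmodule.lieSpan_le.2 (by simpa using hvW)
end

section
/- Let A be the unital associative ℂ-algebra generated by d and invertible elements e^{nc} (n ∈ ℤ) subject to [d, e^{nc}] = 2n e^{nc} and e^{nc}e^{mc} = e^{(n+m)c}. For λ ∈ ℂ*, let U_λ be the A-module generated by a vector v₁ with e^{nc}v₁ = λⁿ v₁ for all n ∈ ℤ and on which d acts freely, so U_λ ≅ ℂ[d] as a vector space. Then U_λ is an irreducible A-module. -/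
open Polynomial

/-- the module `U_λ ≅ ℂ[d]` over the algebra `A` generated by `d` and the
invertible elements `e^{nc}` (with `[d, e^{nc}] = 2n e^{nc}`), on which `d` acts by
multiplication by the variable and `e^{±c}` act by `p(d) ↦ λ^{±1} p(d ± 2)`, is
irreducible: every subspace invariant under these operators is `0` or everything. -/
theorem stmt8 (lam : ℂ) (hlam : lam ≠ 0)
    (W : Submodule ℂ (Polynomial ℂ))
    (hd : ∀ p ∈ W, X * p ∈ W)
    (hshift : ∀ p ∈ W, lam • p.comp (X + C 2) ∈ W)
    (hshift' : ∀ p ∈ W, lam⁻¹ • p.comp (X - C 2) ∈ W) :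
    W = ⊥ ∨ W = ⊤ := by
  by_cases hW : W = ⊥
  · exact Or.inl hW
  right
  obtain ⟨p₀, hp₀W, hp₀⟩ : ∃ p ∈ W, p ≠ 0 := by
    by_contra h
    push_neg at h
    exact hW ((Submodule.eq_bot_iff W).mpr h)
  have key : ∀ n : ℕ, ∀ p : Polynomial ℂ, p ∈ W → p ≠ 0 → p.natDegree = n →
      (1 : Polynomial ℂ) ∈ W := by
    intro n
    induction n using Nat.strong_induction_on with
    | _ n ih =>
      intro p hpW hp hdeg
      rcases Nat.eq_zero_or_pos n with h0 | hpos
      · subst h0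
        obtain ⟨a, ha⟩ : ∃ a, p = C a := ⟨p.coeff 0, Polynomial.eq_C_of_natDegree_eq_zero hdeg⟩
        have hc : a ≠ 0 := by
          intro hc; exact hp (by rw [ha, hc, map_zero])
        have hsm := W.smul_mem a⁻¹ hpW
        have hone : a⁻¹ • p = 1 := by
          rw [ha, Polynomial.smul_C, smul_eq_mul, inv_mul_cancel₀ hc, Polynomial.C_1]
        rwa [hone] at hsm
      · have hcompW : p.comp (X + C 2) ∈ W := by
          have h1 := hshift p hpW
          have h2 := W.smul_mem lam⁻¹ h1
          rwa [smul_smul, inv_mul_cancel₀ hlam, one_smul] at h2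
        set q : Polynomial ℂ := p.comp (X + C 2) - p with hqdef
        have hqW : q ∈ W := W.sub_mem hcompW hpW
        have hq0 : q ≠ 0 := by
          intro h
          have heq : p.comp (X + C 2) = p := by
            have := sub_eq_zero.mp h; exact this
          have heval : ∀ x : ℂ, p.eval (x + 2) = p.eval x := by
            intro x
            conv_rhs => rw [← heq]
            rw [Polynomial.eval_comp]; simp
          have hk : ∀ k : ℕ, p.eval (2 * (k : ℂ)) = p.eval 0 := by
            intro k; induction k with
            | zero => simp
            | succ k ihk =>
              have h2 : (2 : ℂ) * ((k : ℕ) + 1 : ℕ) = 2 * (k : ℂ) + 2 := by push_cast; ring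
              rw [h2, heval, ihk]
          have hg : (p - C (p.eval 0)) = 0 := by
            apply Polynomial.eq_zero_of_infinite_isRoot
            apply Set.infinite_of_injective_forall_mem
              (f := fun k : ℕ => (2 * (k : ℂ)))
            · intro a b hab
              simp only at hab
              have := mul_left_cancel₀ (two_ne_zero (α := ℂ)) hab
              exact_mod_cast this
            · intro k
              simp [Polynomial.IsRoot, hk k]
          have hpc : p = C (p.eval 0) := sub_eq_zero.mp hg
          have : p.natDegree = 0 := by rw [hpc]; exact Polynomial.natDegree_C _
          omega
        have hcompdeg : (p.comp (X + C 2)).natDegree = n := by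
          rw [Polynomial.natDegree_comp, Polynomial.natDegree_X_add_C, mul_one, hdeg]
        have hcomp0 : p.comp (X + C 2) ≠ 0 := by
          intro h
          rw [h, Polynomial.natDegree_zero] at hcompdeg
          omega
        have hlc : (p.comp (X + C 2)).leadingCoeff = p.leadingCoeff := by
          rw [Polynomial.leadingCoeff_comp (by
            rw [Polynomial.natDegree_X_add_C]; exact one_ne_zero)]
          rw [Polynomial.leadingCoeff_X_add_C, one_pow, mul_one]
        have hdlt : q.degree < (p.comp (X + C 2)).degree := by
          apply Polynomial.degree_sub_lt
          · rw [Polynomial.degree_eq_natDegree hcomp0, Polynomial.degree_eq_natDegree hp,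
              hcompdeg, hdeg]
          · exact hcomp0
          · exact hlc
        have hdeglt : q.natDegree < n := by
          have := Polynomial.natDegree_lt_natDegree hq0 hdlt
          rwa [hcompdeg] at this
        exact ih q.natDegree hdeglt q hqW hq0 rfl
  have h1 : (1 : Polynomial ℂ) ∈ W := key p₀.natDegree p₀ hp₀W hp₀ rfl
  have hXn : ∀ k : ℕ, (X : Polynomial ℂ) ^ k ∈ W := by
    intro k; induction k with
    | zero => simpa using h1
    | succ k ihk => rw [pow_succ, mul_comm]; exact hd _ ihk
  rw [eq_top_iff]
  intro p hmem
  clear hmem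
  induction p using Polynomial.induction_on' with
  | add p q hp hq => exact W.add_mem hp hq
  | monomial k a =>
    rw [← Polynomial.C_mul_X_pow_eq_monomial, ← Polynomial.smul_eq_C_mul]
    exact W.smul_mem a (hXn k)
end

section
/- Let b = ℂh + ℂe be the 2-dimensional non-abelian Lie algebra with [h,e] = 2e, and let M be a simple b-module (equivalently a simple ℂ[h,e]-module for the skew algebra with he − eh = 2e). If M is infinite-dimensional, then e acts bijectively on M, and M remains simple as a module over the subalgebra ℂ[e^{m+i}, h : i ≥ 0] generated by h and all powers e^{m+i} of e, for any m ∈ ℤ_{>0}. -/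
open Submodule Polynomial

private lemma pow_apply_succ' {M : Type*} [AddCommGroup M] [Module ℂ M]
    (f : Module.End ℂ M) (n : ℕ) (x : M) : (f ^ (n + 1)) x = f ((f ^ n) x) := by
  rw [pow_succ']; rfl

private lemma pow_apply_succ {M : Type*} [AddCommGroup M] [Module ℂ M]
    (f : Module.End ℂ M) (n : ℕ) (x : M) : (f ^ (n + 1)) x = (f ^ n) (f x) := by
  rw [pow_succ]; rfl

/-- If every `Hop`-invariant subspace of a nontrivial module is trivial, the module is
finite dimensional. -/
private lemma fin_of_hsimple {M : Type*} [AddCommGroup M] [Module ℂ M] [Nontrivial M]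
    (Hop : Module.End ℂ M)
    (hs : ∀ W : Submodule ℂ M, (∀ v ∈ W, Hop v ∈ W) → W = ⊥ ∨ W = ⊤) :
    FiniteDimensional ℂ M := by
  obtain ⟨v, hv⟩ := exists_ne (0 : M)
  by_cases hli : LinearIndependent ℂ (fun n : ℕ => (Hop ^ n) v)
  · exfalso
    set W : Submodule ℂ M := span ℂ (Set.range fun n : ℕ => (Hop ^ (n + 1)) v) with hWdef
    have hgen : ∀ n : ℕ, (Hop ^ (n + 1)) v ∈ W :=
      fun n => subset_span ⟨n, rfl⟩
    have hstab : ∀ x ∈ W, Hop x ∈ W := by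
      intro x hx
      induction hx using Submodule.span_induction with
      | mem x hx =>
        obtain ⟨n, rfl⟩ := hx
        rw [← pow_apply_succ']
        exact hgen (n + 1)
      | zero => simp
      | add a b _ _ ha hb => simpa using W.add_mem ha hb
      | smul c a _ ha => simpa using W.smul_mem c ha
    have hWtop : W = ⊤ := by
      rcases hs W hstab with h | h
      · exfalso
        have : (Hop ^ 1) v ∈ W := by simpa using hgen 0
        rw [h, mem_bot] at this
        exact hli.ne_zero 1 this
      · exact h
    have hvW : v ∈ W := hWtop ▸ mem_top
    have hnot : v ∉ span ℂ ((fun n : ℕ => (Hop ^ n) v) '' {n | n ≠ 0}) := by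
      simpa using hli.notMem_span_image (x := 0) (s := {n | n ≠ 0}) (by simp)
    refine hnot (span_mono ?_ hvW)
    rintro _ ⟨n, rfl⟩
    exact ⟨n + 1, by simp, rfl⟩
  · rw [linearIndependent_powers_iff_aeval] at hli
    push_neg at hli
    obtain ⟨p, hp0, hp⟩ := hli
    set d := p.natDegree with hd
    have hcd : p.coeff d ≠ 0 := Polynomial.leadingCoeff_ne_zero.mpr hp
    have hdpos : 0 < d := by
      rcases Nat.eq_zero_or_pos d with h | h
      · exfalso
        have hpc := Polynomial.eq_C_of_natDegree_eq_zero h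
        rw [hpc] at hp0
        simp only [Polynomial.aeval_C, Module.algebraMap_end_apply] at hp0
        exact hv ((smul_eq_zero.mp hp0).resolve_left (by rwa [h] at hcd))
      · exact h
    set S : Submodule ℂ M := span ℂ (Set.range fun i : Fin d => (Hop ^ (i : ℕ)) v) with hSdef
    have hmemS : ∀ i : ℕ, i < d → (Hop ^ i) v ∈ S :=
      fun i hi => subset_span ⟨⟨i, hi⟩, rfl⟩
    have hdS : (Hop ^ d) v ∈ S := by
      have h1 : (aeval Hop) p = ∑ i ∈ Finset.range (d + 1), p.coeff i • Hop ^ i :=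
        Polynomial.aeval_eq_sum_range Hop
      have hsum : ∑ i ∈ Finset.range (d + 1), p.coeff i • (Hop ^ i) v = 0 := by
        have h2 := congrArg (fun f : Module.End ℂ M => f v) h1
        simp only [LinearMap.sum_apply, LinearMap.smul_apply] at h2
        rw [← h2]
        exact hp0
      rw [Finset.sum_range_succ] at hsum
      have hsum' : p.coeff d • (Hop ^ d) v = -∑ i ∈ Finset.range d, p.coeff i • (Hop ^ i) v :=
        eq_neg_of_add_eq_zero_right hsum
      have hx : (Hop ^ d) v = (p.coeff d)⁻¹ • (p.coeff d • (Hop ^ d) v) := by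
        rw [smul_smul, inv_mul_cancel₀ hcd, one_smul]
      rw [hx, hsum']
      refine S.smul_mem _ (S.neg_mem (Submodule.sum_mem S fun i hi => ?_))
      exact S.smul_mem _ (hmemS i (Finset.mem_range.mp hi))
    have hstab : ∀ x ∈ S, Hop x ∈ S := by
      intro x hx
      induction hx using Submodule.span_induction with
      | mem x hx =>
        obtain ⟨⟨i, hi⟩, rfl⟩ := hx
        show Hop ((Hop ^ i) v) ∈ S
        rw [← pow_apply_succ']
        rcases Nat.lt_or_ge (i + 1) d with h | h
        · exact hmemS _ h
        · have hEq : i + 1 = d := by omega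
          rw [hEq]; exact hdS
      | zero => simp
      | add a b _ _ ha hb => simpa using S.add_mem ha hb
      | smul c a _ ha => simpa using S.smul_mem c ha
    have hStop : S = ⊤ := by
      rcases hs S hstab with h | h
      · exfalso
        have : (Hop ^ 0) v ∈ S := hmemS 0 hdpos
        rw [h, mem_bot] at this
        simpa using hv this
      · exact h
    have : FiniteDimensional ℂ S := FiniteDimensional.span_of_finite ℂ (Set.finite_range _)
    rw [hStop] at this
    exact Module.Finite.equiv Submodule.topEquiv

/-- let `M` be a simple module over the Borel `b = ℂh + ℂe`, `[h,e] = 2e`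
(given by operators `Hop`, `Eop` with `Hop ∘ Eop − Eop ∘ Hop = 2 Eop`).  If `M` is
infinite-dimensional then `e` acts bijectively, and `M` remains simple over the
subalgebra generated by `h` and the powers `e^k`, `k ≥ m`, for every `m > 0`. -/
theorem stmt9 {M : Type*} [AddCommGroup M] [Module ℂ M] [Nontrivial M]
    (Hop Eop : Module.End ℂ M)
    (hrel : Hop * Eop - Eop * Hop = (2 : ℂ) • Eop)
    (hsimple : ∀ W : Submodule ℂ M,
      (∀ v ∈ W, Hop v ∈ W) → (∀ v ∈ W, Eop v ∈ W) → W = ⊥ ∨ W = ⊤)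
    (hinf : ¬ FiniteDimensional ℂ M) :
    Function.Bijective Eop ∧
      ∀ m : ℕ, 0 < m →
        ∀ W : Submodule ℂ M, (∀ v ∈ W, Hop v ∈ W) →
          (∀ k : ℕ, m ≤ k → ∀ v ∈ W, (Eop ^ k) v ∈ W) →
          W = ⊥ ∨ W = ⊤ := by
  have hE0 : Eop ≠ 0 := by
    intro h
    exact hinf (fin_of_hsimple Hop (fun W hW => hsimple W hW (fun v _ => by simp [h])))
  have hEH : ∀ v : M, Eop (Hop v) = Hop (Eop v) - (2 : ℂ) • Eop v := by
    intro v
    have h1 := DFunLike.congr_fun hrel v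
    simp only [LinearMap.sub_apply, Module.End.mul_apply, LinearMap.smul_apply] at h1
    rw [eq_sub_iff_add_eq, ← h1]
    abel
  have hker : LinearMap.ker Eop = ⊥ := by
    rcases hsimple (LinearMap.ker Eop)
        (fun v hv => by
          rw [LinearMap.mem_ker] at hv ⊢
          rw [hEH v, hv]; simp)
        (fun v hv => by
          rw [LinearMap.mem_ker] at hv ⊢
          rw [hv]; simp) with h | h
    · exact h
    · exact absurd (LinearMap.ker_eq_top.mp h) hE0
  have hrange : LinearMap.range Eop = ⊤ := by
    rcases hsimple (LinearMap.range Eop)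
        (fun v hv => by
          obtain ⟨w, rfl⟩ := hv
          refine ⟨Hop w + (2 : ℂ) • w, ?_⟩
          rw [map_add, map_smul, hEH w]
          abel)
        (fun v _ => ⟨v, rfl⟩) with h | h
    · exfalso
      apply hE0
      exact LinearMap.range_eq_bot.mp h
    · exact h
  have hbij : Function.Bijective Eop :=
    ⟨LinearMap.ker_eq_bot.mp hker, LinearMap.range_eq_top.mp hrange⟩
  refine ⟨hbij, ?_⟩
  intro m hm W hWH hWE
  by_cases hW : W = ⊥
  · exact Or.inl hW
  right
  have hEkH : ∀ (k : ℕ) (v : M),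
      (Eop ^ k) (Hop v) = Hop ((Eop ^ k) v) - ((2 * k : ℂ)) • (Eop ^ k) v := by
    intro k
    induction k with
    | zero => simp
    | succ k ih =>
      intro v
      rw [pow_apply_succ Eop k (Hop v), hEH v, map_sub, map_smul, ih (Eop v),
        ← pow_apply_succ Eop k v]
      push_cast
      module
  set Z : Submodule ℂ M :=
    ⨅ (k : ℕ) (_ : m ≤ k), Submodule.comap ((Eop ^ k : Module.End ℂ M) : M →ₗ[ℂ] M) W with hZdef
  have hmemZ : ∀ v : M, v ∈ Z ↔ ∀ k, m ≤ k → (Eop ^ k) v ∈ W := by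
    intro v
    simp [hZdef, Submodule.mem_iInf]
  have hZtop : Z = ⊤ := by
    rcases hsimple Z
        (fun v hv => by
          rw [hmemZ] at hv ⊢
          intro k hk
          rw [hEkH k v]
          exact W.sub_mem (hWH _ (hv k hk)) (W.smul_mem _ (hv k hk)))
        (fun v hv => by
          rw [hmemZ] at hv ⊢
          intro k hk
          rw [← pow_apply_succ Eop k v]
          exact hv (k + 1) (le_trans hk (Nat.le_succ k))) with h | h
    · exfalso
      apply hW
      rw [eq_bot_iff] at h ⊢
      refine le_trans ?_ h
      intro v hv
      rw [hmemZ]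
      exact fun k hk => hWE k hk v hv
    · exact h
  rw [eq_top_iff]
  intro u _
  have hsurj : Function.Surjective ⇑(Eop ^ m) := by
    intro x
    obtain ⟨w, hw⟩ := (hbij.surjective.iterate m) x
    exact ⟨w, by rw [Module.End.pow_apply]; exact hw⟩
  obtain ⟨w, rfl⟩ := hsurj u
  have hwZ : w ∈ Z := hZtop ▸ mem_top
  rw [hmemZ] at hwZ
  exact hwZ m le_rfl
end

section
/- Let χ(z) = Σ_{k ≥ −p} χ_{−k} z^{k−1} and χ'(z) = Σ_{k ≥ −p} χ'_{−k} z^{k−1} be formal Laurent series in ℂ((z)) with χ_p ≠ 0, p ≥ 2. If χ_k = χ'_k for all k ≥ 1 and χ(z)² − 2∂_z χ(z) = χ'(z)² − 2∂_z χ'(z), then χ(z) = χ'(z). -/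
open Finset

/-- let `χ(z) = Σ_{n} a_n z^n` and `χ'(z) = Σ_n b_n z^n` be Laurent series
(coefficient functions `a b : ℤ → ℂ`) supported in degrees `≥ −(p+1)` with `p ≥ 2` and
nonzero leading coefficient `a_{−(p+1)} = χ_p ≠ 0`.  If the coefficients in degrees
`≤ −2` agree (i.e. `χ_k = χ'_k` for `k ≥ 1`) and `χ² − 2∂χ = χ'² − 2∂χ'`
coefficientwise, then `χ = χ'`. -/
theorem stmt11 (p : ℕ) (hp : 2 ≤ p) (a b : ℤ → ℂ)
    (ha : ∀ n : ℤ, n < -((p : ℤ) + 1) → a n = 0)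
    (hb : ∀ n : ℤ, n < -((p : ℤ) + 1) → b n = 0)
    (hlead : a (-((p : ℤ) + 1)) ≠ 0)
    (hagree : ∀ n : ℤ, n ≤ -2 → a n = b n)
    (heq : ∀ n : ℤ,
      (∑ i ∈ Finset.Icc (-((p : ℤ) + 1)) (n + (p : ℤ) + 1), a i * a (n - i))
          - 2 * ((n + 1 : ℤ) : ℂ) * a (n + 1)
        = (∑ i ∈ Finset.Icc (-((p : ℤ) + 1)) (n + (p : ℤ) + 1), b i * b (n - i))
          - 2 * ((n + 1 : ℤ) : ℂ) * b (n + 1)) :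
    a = b := by
  have key : ∀ N : ℕ, ∀ n : ℤ, n ≤ -2 + N → a n = b n := by
    intro N
    induction N with
    | zero => intro n hn; exact hagree n (by omega)
    | succ N ih =>
      intro n hn
      rcases lt_or_eq_of_le hn with h | h
      · exact ih n (by push_cast at h ⊢; omega)
      · have hn' : n = -1 + (N : ℤ) := by push_cast at h; omega
        have hIH : ∀ k : ℤ, k < n → a k = b k := by
          intro k hk
          rcases le_or_gt k (-2 : ℤ) with hk2 | hk2
          · exact hagree k hk2
          · exact ih k (by omega)
        set m : ℤ := n - ((p : ℤ) + 1) with hm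
        have hne : (-((p : ℤ) + 1)) ≠ n := by omega
        have hder : a (m + 1) = b (m + 1) := hIH _ (by omega)
        have hlead' : a (-((p : ℤ) + 1)) = b (-((p : ℤ) + 1)) := hagree _ (by omega)
        have hi1 : m - (-((p : ℤ) + 1)) = n := by omega
        have hi2 : m - n = -((p : ℤ) + 1) := by omega
        have hsub : ({-((p : ℤ) + 1), n} : Finset ℤ) ⊆
            Finset.Icc (-((p : ℤ) + 1)) (m + (p : ℤ) + 1) := by
          intro i hi
          simp only [Finset.mem_insert, Finset.mem_singleton] at hi
          simp only [Finset.mem_Icc]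
          rcases hi with rfl | rfl <;> omega
        have hzero : ∀ i ∈ Finset.Icc (-((p : ℤ) + 1)) (m + (p : ℤ) + 1),
            i ∉ ({-((p : ℤ) + 1), n} : Finset ℤ) →
            a i * a (m - i) - b i * b (m - i) = 0 := by
          intro i hi hi'
          simp only [Finset.mem_Icc] at hi
          simp only [Finset.mem_insert, Finset.mem_singleton, not_or] at hi'
          rw [hIH i (by omega), hIH (m - i) (by omega), sub_self]
        have hE := heq m
        have hSab : (∑ i ∈ Finset.Icc (-((p : ℤ) + 1)) (m + (p : ℤ) + 1),
            (a i * a (m - i) - b i * b (m - i))) = 0 := by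
          rw [Finset.sum_sub_distrib]
          have : 2 * ((m + 1 : ℤ) : ℂ) * a (m + 1)
              = 2 * ((m + 1 : ℤ) : ℂ) * b (m + 1) := by rw [hder]
          linear_combination hE + this
        rw [← Finset.sum_subset hsub hzero, Finset.sum_pair hne, hi1, hi2,
          hlead'] at hSab
        have : b (-((p : ℤ) + 1)) * (a n - b n) * 2 = 0 := by linear_combination hSab
        rw [hlead'] at hlead
        have h2 : a n - b n = 0 := by
          rcases mul_eq_zero.mp this with h0 | h0
          · rcases mul_eq_zero.mp h0 with h0 | h0
            · exact absurd h0 hlead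
            · exact h0
          · exact absurd h0 two_ne_zero
        exact sub_eq_zero.mp h2
  funext n
  exact key (n + 2).toNat n (by omega)
end

section
/- Let A be the Weyl algebra with generators a(n), a*(n), n ∈ ℤ, and relations [a(n), a*(m)] = δ_{n+m,0}, [a(n),a(m)] = [a*(n),a*(m)] = 0. For λ, μ ∈ ℂ there exists a module M₁(λ,μ) generated by a vector v₁ satisfying a(0)v₁ = λv₁, a(n)v₁ = 0 for n ≥ 1, a*(1)v₁ = μv₁, a*(m)v₁ = 0 for m ≥ 2, and M₁(λ,μ) has a PBW-type basis {a(−λ₁)⋯a(−λ_r)a*(−μ₁+1)⋯a*(−μ_s+1)v₁} indexed by pairs of partitions (λ₁ ≥ … ≥ λ_r ≥ 1, μ₁ ≥ … ≥ μ_s ≥ 1). -/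
/-!
Realise `M₁(λ, μ)` as a Fock space: the polynomial ring in variables `x_k, y_k` (`k ∈ ℕ`) with
`v₁ = 1`, on which `a(-k)` and `a*(1-k)` (`k ≥ 1`) act by multiplication by variables and the
other generators by partial derivatives shifted by the eigenvalues `λ`, `μ`. The commutation
relations reduce to `[∂/∂x_i, x_j] = δ_{ij}`, and the PBW vectors are exactly the monomials:
a pair of partitions is the same thing as an exponent vector, via the multisets of its parts.
-/

/-- A partition with positive parts, written as a decreasing list `λ₁ ≥ λ₂ ≥ … ≥ λ_r ≥ 1`. -/
def PartitionList : Type := {l : List ℕ // l.Pairwise (· ≥ ·) ∧ ∀ x ∈ l, 1 ≤ x}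

open MvPolynomial

namespace MvPolynomial

variable {R σ : Type*} [CommSemiring R]

theorem pderiv_pderiv_comm (i j : σ) (p : MvPolynomial σ R) :
    pderiv i (pderiv j p) = pderiv j (pderiv i p) := by
  classical
  induction p using MvPolynomial.induction_on with
  | C a => simp only [pderiv_C, map_zero]
  | add p q hp hq => simp only [map_add, hp, hq]
  | mul_X p k hp =>
    simp only [pderiv_mul, map_add, hp, pderiv_X]
    by_cases hik : i = k <;> by_cases hjk : j = k <;> simp [hik, hjk]

theorem pderiv_X_mul [DecidableEq σ] (i j : σ) (p : MvPolynomial σ R) :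
    pderiv i (X j * p) = X j * pderiv i p + if i = j then p else 0 := by
  rw [pderiv_mul, pderiv_X]
  by_cases h : i = j <;> simp [h, add_comm]

noncomputable def creation (i : σ) : Module.End R (MvPolynomial σ R) :=
  Algebra.lmul R _ (X i)

noncomputable def annihilation (c d : R) (i : σ) : Module.End R (MvPolynomial σ R) :=
  c • 1 + d • (pderiv i).toLinearMap

theorem creation_apply (i : σ) (p : MvPolynomial σ R) : creation i p = X i * p := rfl

theorem annihilation_apply (c d : R) (i : σ) (p : MvPolynomial σ R) :
    annihilation c d i p = c • p + d • pderiv i p := rfl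

theorem annihilation_apply_one (c d : R) (i : σ) :
    annihilation c d i (1 : MvPolynomial σ R) = c • 1 := by
  rw [annihilation_apply, pderiv_one, smul_zero, add_zero]

theorem commute_creation (i j : σ) : Commute (creation (R := R) i) (creation j) :=
  (Commute.all _ _).map _

theorem commute_annihilation (c d c' d' : R) (i j : σ) :
    Commute (annihilation c d i) (annihilation c' d' j) := by
  refine LinearMap.ext fun p => ?_
  simp only [Module.End.mul_apply, annihilation_apply, map_add, map_smul,
    pderiv_pderiv_comm i j]
  module

theorem annihilation_mul_creation [DecidableEq σ] (c d : R) (i j : σ) :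
    annihilation c d i * creation j =
      creation j * annihilation c d i + if i = j then d • 1 else 0 := by
  refine LinearMap.ext fun p => ?_
  simp only [Module.End.mul_apply, LinearMap.add_apply, annihilation_apply, creation_apply,
    pderiv_X_mul i j]
  split_ifs <;> simp [mul_add, add_assoc]

theorem commute_annihilation_creation (c d : R) {i j : σ} (h : i ≠ j) :
    Commute (annihilation c d i) (creation j) := by
  classical
  rw [Commute, SemiconjBy, annihilation_mul_creation, if_neg h, add_zero]

theorem list_prod_map_creation {ι : Type*} (f : ι → σ) (l : List ι) :
    (l.map fun k => creation (R := R) (f k)).prod =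
      Algebra.lmul R _ (l.map fun k => X (f k)).prod := by
  rw [map_list_prod, List.map_map]
  rfl

theorem monomial_toFinsupp [DecidableEq σ] (s : Multiset σ) :
    monomial (Multiset.toFinsupp s) (1 : R) = (s.map X).prod := by
  induction s using Multiset.induction_on with
  | empty => simp
  | cons a s ih =>
    rw [← Multiset.singleton_add, Multiset.toFinsupp_add, Multiset.toFinsupp_singleton,
      ← mul_one (1 : R), ← monomial_mul, ih, Multiset.map_add, Multiset.prod_add]
    simp [X]

end MvPolynomial

noncomputable def PartitionList.equivMultiset : PartitionList ≃ Multiset ℕ where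
  toFun l := (l.1 : Multiset ℕ).map (· - 1)
  invFun s := ⟨(s.map (· + 1)).sort (· ≥ ·), Multiset.pairwise_sort _ _, by simp⟩
  left_inv := by
    rintro ⟨l, hsorted, hpos⟩
    have hshift : ((l : Multiset ℕ).map (· - 1)).map (· + 1) = l := by
      rw [Multiset.map_map]
      exact (Multiset.map_congr rfl fun k hk => Nat.sub_add_cancel (hpos k hk)).trans
        (Multiset.map_id _)
    refine Subtype.ext ?_
    simp only [hshift]
    exact List.Perm.eq_of_pairwise' (Multiset.pairwise_sort _ _) hsorted
      (Multiset.coe_eq_coe.mp (Multiset.sort_eq _ _))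
  right_inv s := by simp [Multiset.map_map]

theorem Multiset.toFinsupp_map_inl_add_map_inr {α β : Type*} [DecidableEq α] [DecidableEq β]
    (s : Multiset α) (t : Multiset β) :
    toFinsupp (s.map Sum.inl + t.map Sum.inr) = (toFinsupp s).sumElim (toFinsupp t) := by
  ext (a | b) <;>
    simp [Multiset.toFinsupp_apply, Multiset.count_map_eq_count' _ _ Sum.inl_injective,
      Multiset.count_map_eq_count' _ _ Sum.inr_injective, Multiset.count_eq_zero_of_notMem]

section WeylFock

variable {R : Type*} [CommRing R]

/- With `x_k = X (inl k)` and `y_k = X (inr k)`: `a(-k) = x_{k-1}` and `a*(1-k) = y_{k-1}` for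
`k ≥ 1`, `a(n) = λ δ_{n,0} + ∂/∂y_n` for `n ≥ 0`, `a*(m) = μ δ_{m,1} - ∂/∂x_{m-1}` for `m ≥ 1`. -/
noncomputable def weylA (lam : R) (n : ℤ) : Module.End R (MvPolynomial (ℕ ⊕ ℕ) R) :=
  if n < 0 then creation (Sum.inl (-n - 1).toNat)
  else annihilation (if n = 0 then lam else 0) 1 (Sum.inr n.toNat)

noncomputable def weylA' (mu : R) (m : ℤ) : Module.End R (MvPolynomial (ℕ ⊕ ℕ) R) :=
  if 0 < m then annihilation (if m = 1 then mu else 0) (-1) (Sum.inl (m - 1).toNat)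
  else creation (Sum.inr (-m).toNat)

theorem weylA_mul_weylA'_sub (lam mu : R) (n m : ℤ) :
    weylA lam n * weylA' mu m - weylA' mu m * weylA lam n = if n + m = 0 then 1 else 0 := by
  by_cases hn : n < 0 <;> by_cases hm : 0 < m <;>
    simp only [weylA, weylA', hn, hm, if_true, if_false]
  · rw [annihilation_mul_creation, sub_add_cancel_left]
    simp only [Sum.inl.injEq]
    split_ifs <;> first | omega | ext; simp
  · rw [(commute_creation _ _).eq, sub_self, if_neg (by omega)]
  · rw [(commute_annihilation _ _ _ _ _ _).eq, sub_self, if_neg (by omega)]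
  · rw [annihilation_mul_creation, add_sub_cancel_left]
    simp only [Sum.inr.injEq]
    split_ifs <;> first | omega | ext; simp

theorem commute_weylA (lam : R) (n m : ℤ) : Commute (weylA lam n) (weylA lam m) := by
  by_cases hn : n < 0 <;> by_cases hm : m < 0 <;> simp only [weylA, hn, hm, if_true, if_false]
  · exact commute_creation _ _
  · exact (commute_annihilation_creation _ _ Sum.inr_ne_inl).symm
  · exact commute_annihilation_creation _ _ Sum.inr_ne_inl
  · exact commute_annihilation _ _ _ _ _ _

theorem commute_weylA' (mu : R) (n m : ℤ) : Commute (weylA' mu n) (weylA' mu m) := by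
  by_cases hn : 0 < n <;> by_cases hm : 0 < m <;> simp only [weylA', hn, hm, if_true, if_false]
  · exact commute_annihilation _ _ _ _ _ _
  · exact commute_annihilation_creation _ _ Sum.inl_ne_inr
  · exact (commute_annihilation_creation _ _ Sum.inl_ne_inr).symm
  · exact commute_creation _ _

theorem weylA_apply_one (lam : R) {n : ℤ} (hn : 0 ≤ n) :
    weylA lam n 1 = (if n = 0 then lam else 0) • 1 := by
  rw [weylA, if_neg (not_lt.mpr hn), annihilation_apply_one]

theorem weylA'_apply_one (mu : R) {m : ℤ} (hm : 0 < m) :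
    weylA' mu m 1 = (if m = 1 then mu else 0) • 1 := by
  rw [weylA', if_pos hm, annihilation_apply_one]

theorem weylA_neg (lam : R) {k : ℕ} (hk : 1 ≤ k) :
    weylA lam (-k) = creation (Sum.inl (k - 1)) := by
  rw [weylA, if_pos (by omega)]
  congr
  omega

theorem weylA'_one_sub (mu : R) {k : ℕ} (hk : 1 ≤ k) :
    weylA' mu (1 - k) = creation (Sum.inr (k - 1)) := by
  rw [weylA', if_neg (by omega)]
  congr
  omega

noncomputable def partitionPairEquiv : PartitionList × PartitionList ≃ ((ℕ ⊕ ℕ) →₀ ℕ) :=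
  ((PartitionList.equivMultiset.trans Multiset.toFinsupp.toEquiv).prodCongr
    (PartitionList.equivMultiset.trans Multiset.toFinsupp.toEquiv)).trans
    Finsupp.sumFinsuppEquivProdFinsupp.symm

theorem partitionPairEquiv_apply (st : PartitionList × PartitionList) :
    partitionPairEquiv st = Multiset.toFinsupp
      (((st.1.1 : Multiset ℕ).map (· - 1)).map Sum.inl +
        ((st.2.1 : Multiset ℕ).map (· - 1)).map Sum.inr) :=
  (Multiset.toFinsupp_map_inl_add_map_inr _ _).symm

noncomputable def weylPBWBasis :
    Module.Basis (PartitionList × PartitionList) R (MvPolynomial (ℕ ⊕ ℕ) R) :=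
  (basisMonomials (ℕ ⊕ ℕ) R).reindex partitionPairEquiv.symm

theorem coe_weylPBWBasis (lam mu : R) :
    ⇑(weylPBWBasis (R := R)) = fun st : PartitionList × PartitionList =>
      ((st.1.1.map fun k => weylA lam (-(k : ℤ))).prod *
        (st.2.1.map fun k => weylA' mu (1 - (k : ℤ))).prod) 1 := by
  funext st
  obtain ⟨⟨l₁, -, hl₁⟩, ⟨l₂, -, hl₂⟩⟩ := st
  -- `(k : ℤ)` makes Lean coerce the whole list `l₁ : List ℕ` to `List ℤ` (a monadic bind).
  simp only [List.pure_def, List.bind_eq_flatMap, ← List.map_eq_flatMap, List.map_map,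
    Function.comp_def]
  rw [List.map_congr_left fun k hk => weylA_neg lam (hl₁ k hk),
    List.map_congr_left fun k hk => weylA'_one_sub mu (hl₂ k hk),
    list_prod_map_creation, list_prod_map_creation, weylPBWBasis, Module.Basis.reindex_apply,
    Equiv.symm_symm, coe_basisMonomials]
  beta_reduce
  rw [partitionPairEquiv_apply, monomial_toFinsupp, Module.End.mul_apply]
  simp only [Multiset.map_coe, List.map_map, Function.comp_def, Multiset.coe_add, List.map_append,
    Multiset.prod_coe, List.prod_append, Algebra.coe_lmul_eq_mul, LinearMap.mul_apply_apply, mul_one]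

end WeylFock

/-- existence of the Whittaker module `M₁(λ,μ)` over the infinite Weyl
algebra (generators `a(n) = A n`, `a*(n) = A' n`, `[a(n), a*(m)] = δ_{n+m,0}`), generated
by a vector `v₁` with `a(0)v₁ = λv₁`, `a(n)v₁ = 0` for `n ≥ 1`, `a*(1)v₁ = μv₁`,
`a*(m)v₁ = 0` for `m ≥ 2`, together with its PBW basis
`a(−λ₁)⋯a(−λ_r) a*(−μ₁+1)⋯a*(−μ_s+1) v₁` indexed by pairs of partitions. -/
theorem stmt12 (lam mu : ℂ) :
    ∃ (V : Type) (_ : AddCommGroup V) (_ : Module ℂ V)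
      (A A' : ℤ → Module.End ℂ V) (v₁ : V),
      (∀ n m : ℤ, A n * A' m - A' m * A n = if n + m = 0 then 1 else 0) ∧
      (∀ n m : ℤ, A n * A m = A m * A n) ∧
      (∀ n m : ℤ, A' n * A' m = A' m * A' n) ∧
      A 0 v₁ = lam • v₁ ∧ (∀ n : ℤ, 1 ≤ n → A n v₁ = 0) ∧
      A' 1 v₁ = mu • v₁ ∧ (∀ m : ℤ, 2 ≤ m → A' m v₁ = 0) ∧
      LinearIndependent ℂ (fun st : PartitionList × PartitionList =>
        (((st.1.1.map fun k => A (-(k : ℤ))).prod *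
          (st.2.1.map fun k => A' (1 - (k : ℤ))).prod) v₁)) ∧
      Submodule.span ℂ (Set.range (fun st : PartitionList × PartitionList =>
        (((st.1.1.map fun k => A (-(k : ℤ))).prod *
          (st.2.1.map fun k => A' (1 - (k : ℤ))).prod) v₁))) = ⊤ := by
  refine ⟨MvPolynomial (ℕ ⊕ ℕ) ℂ, inferInstance, inferInstance, weylA lam, weylA' mu, 1,
    weylA_mul_weylA'_sub lam mu, fun n m => (commute_weylA lam n m).eq,
    fun n m => (commute_weylA' mu n m).eq, ?_, fun n hn => ?_, ?_, fun m hm => ?_, ?_, ?_⟩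
  · rw [weylA_apply_one lam le_rfl, if_pos rfl]
  · rw [weylA_apply_one lam (by omega), if_neg (by omega), zero_smul]
  · rw [weylA'_apply_one mu one_pos, if_pos rfl]
  · rw [weylA'_apply_one mu (by omega), if_neg (by omega), zero_smul]
  · rw [← coe_weylPBWBasis lam mu]
    exact weylPBWBasis.linearIndependent
  · rw [← coe_weylPBWBasis lam mu]
    exact weylPBWBasis.span_eq
end

section
/- In the setting of the Weyl algebra module M₁(λ,μ) with λ ≠ 0, define φ(n) = −2 Σ_k a*(k)a(n−k) for n ≠ 0 and φ(0) = −2(Σ_{k≤−1} a(k)a*(−k) + Σ_{k≥0} a*(−k)a(k)) (these sums act locally finitely on M₁(λ,μ)). Then [φ(n), φ(m)] = −4n δ_{n+m,0} and [φ(n), a(m)] = 2a(n+m) as operators on M₁(λ,μ). -/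
open Finset Filter

attribute [local instance] LieRing.ofAssociativeRing

section Weyl

variable {𝒜 : Type*} [Ring 𝒜]

theorem Ring.mul_lie (x y z : 𝒜) : ⁅x * y, z⁆ = x * ⁅y, z⁆ + ⁅x, z⁆ * y := by
  simp only [Ring.lie_def]
  noncomm_ring

structure IsWeylPair (a a' : ℤ → 𝒜) : Prop where
  lie_a_a' : ∀ n m, ⁅a n, a' m⁆ = if n + m = 0 then 1 else 0
  commute_a : ∀ n m, Commute (a n) (a m)
  commute_a' : ∀ n m, Commute (a' n) (a' m)

/-- The `k`-th summand of `φ(n)` without the factor `-2`, indexed as in the defining sums: for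
`n ≠ 0` it is `a*(k) a(n-k)`, for `n = 0` the normally ordered product `:a(k) a*(-k):`. -/
def phiSummand (a a' : ℤ → 𝒜) (n k : ℤ) : 𝒜 :=
  if n = 0 then (if k ≤ -1 then a k * a' (-k) else a' (-k) * a k) else a' k * a (n - k)

namespace IsWeylPair

variable {a a' : ℤ → 𝒜}

theorem lie_a'_a (h : IsWeylPair a a') (m n : ℤ) :
    ⁅a' m, a n⁆ = -if n + m = 0 then 1 else 0 := by
  rw [← lie_skew, h.lie_a_a']

theorem exists_lie_phiSummand_a (h : IsWeylPair a a') (n m : ℤ) :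
    ∃ κ, ∀ k, ⁅phiSummand a a' n k, a m⁆ = if k = κ then -a (n + m) else 0 := by
  rcases eq_or_ne n 0 with rfl | hn
  · refine ⟨m, fun k => ?_⟩
    simp only [phiSummand, if_true]
    split_ifs <;> simp_all [Ring.mul_lie, (h.commute_a _ _).lie_eq, h.lie_a'_a]
    all_goals omega
  · refine ⟨-m, fun k => ?_⟩
    simp only [phiSummand, if_neg hn]
    split_ifs <;> simp_all [Ring.mul_lie, (h.commute_a _ _).lie_eq, h.lie_a'_a]
    all_goals omega

theorem exists_lie_phiSummand_a' (h : IsWeylPair a a') (n m : ℤ) :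
    ∃ κ, ∀ k, ⁅phiSummand a a' n k, a' m⁆ = if k = κ then a' (n + m) else 0 := by
  rcases eq_or_ne n 0 with rfl | hn
  · refine ⟨-m, fun k => ?_⟩
    simp only [phiSummand, if_true]
    split_ifs <;> simp_all [Ring.mul_lie, (h.commute_a' _ _).lie_eq, h.lie_a_a']
    all_goals omega
  · refine ⟨n + m, fun k => ?_⟩
    simp only [phiSummand, if_neg hn]
    split_ifs <;> simp_all [Ring.mul_lie, (h.commute_a' _ _).lie_eq, h.lie_a_a']
    all_goals omega

end IsWeylPair

end Weyl

theorem Finset.sum_Ico_add_sub_sum_Ico {G : Type*} [AddCommGroup G] (g : ℤ → G) {a b : ℤ}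
    (hab : a ≤ b) (n : ℕ) :
    ∑ k ∈ Ico a b, g (k + n) - ∑ k ∈ Ico a b, g k =
      ∑ k ∈ Ico b (b + n), g k - ∑ k ∈ Ico a (a + n), g k := by
  have split : ∀ {x y z : ℤ}, x ≤ y → y ≤ z →
      ∑ k ∈ Ico x y, g k + ∑ k ∈ Ico y z, g k = ∑ k ∈ Ico x z, g k := fun hxy hyz => by
    rw [← sum_union (Ico_disjoint_Ico_consecutive _ _ _), Ico_union_Ico_eq_Ico hxy hyz]
  rw [sum_Ico_add', sub_eq_sub_iff_add_eq_add, add_comm (∑ k ∈ Ico (a + n) (b + n), g k),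
    split (by omega) (by omega), add_comm (∑ k ∈ Ico b (b + n), g k), split hab (by omega)]

theorem eventually_sum_Ico_add_sub_sum_Ico {G : Type*} [AddCommGroup G] {g : ℤ → G} {c : G}
    (hbot : ∀ᶠ j in atBot, g j = 0) (htop : ∀ᶠ j in atTop, g j = c) (n : ℤ) :
    ∀ᶠ M in atTop, ∑ k ∈ Ico (-M) M, g (k + n) - ∑ k ∈ Ico (-M) M, g k = n • c := by
  obtain ⟨N₀, hN₀⟩ := eventually_atBot.1 hbot
  obtain ⟨N₁, hN₁⟩ := eventually_atTop.1 htop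
  have sum_top : ∀ {b : ℤ} (n : ℕ), N₁ ≤ b → ∑ k ∈ Ico b (b + n), g k = n • c := fun n hb => by
    rw [sum_congr rfl fun k hk => hN₁ k (by grind), sum_const, Int.card_Ico]
    simp
  have sum_bot : ∀ {a : ℤ} (n : ℕ), a + n ≤ N₀ + 1 → ∑ k ∈ Ico a (a + n), g k = 0 :=
    fun n ha => sum_eq_zero fun k hk => hN₀ k (by grind)
  obtain ⟨n, rfl | rfl⟩ := Int.eq_nat_or_neg n
  · filter_upwards [eventually_ge_atTop (N₁ + n), eventually_ge_atTop (n - N₀),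
      eventually_ge_atTop 0] with M h₁ h₀ hM
    rw [Finset.sum_Ico_add_sub_sum_Ico g (by omega), sum_top (b := M) n (by omega),
      sum_bot (a := -M) n (by omega), sub_zero, natCast_zsmul]
  · filter_upwards [eventually_ge_atTop (N₁ + n), eventually_ge_atTop (n - N₀),
      eventually_ge_atTop 0] with M h₁ h₀ hM
    have := Finset.sum_Ico_add_sub_sum_Ico g (a := -M - n) (b := M - n) (by omega) n
    rw [sum_top (b := M - n) n (by omega), sum_bot (a := -M - n) n (by omega), sub_zero,
      sum_Ico_add', sub_add_cancel, sub_add_cancel] at this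
    rw [sum_Ico_add', ← sub_eq_add_neg, ← sub_eq_add_neg, ← neg_sub, this, neg_smul,
      natCast_zsmul]

section LocallyFiniteSum

variable {R V : Type*} [Semiring R] [AddCommGroup V] [Module R V]

def HasLocallyFiniteSum (T : ℤ → Module.End R V) (Φ : Module.End R V) : Prop :=
  ∀ w, ∀ᶠ F in atTop, Φ w = ∑ k ∈ F, T k w

namespace HasLocallyFiniteSum

variable {T : ℤ → Module.End R V} {Φ : Module.End R V}

theorem eventually_cofinite_apply_eq_zero (h : HasLocallyFiniteSum T Φ) (w : V) :
    ∀ᶠ k in cofinite, T k w = 0 := by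
  obtain ⟨s, hs⟩ := eventually_atTop.1 (h w)
  refine eventually_cofinite.2 (s.finite_toSet.subset fun k hk => ?_)
  by_contra hks
  have := (hs s le_rfl).symm.trans (hs (insert k s) (subset_insert k s))
  rw [sum_insert hks, right_eq_add] at this
  exact hk this

theorem eventually_lie_apply_eq_sum (h : HasLocallyFiniteSum T Φ) (Ψ : Module.End R V) (w : V) :
    ∀ᶠ F in atTop, ⁅Φ, Ψ⁆ w = ∑ k ∈ F, ⁅T k, Ψ⁆ w := by
  filter_upwards [h (Ψ w), h w] with F hΨw hw
  simp only [Ring.lie_def, LinearMap.sub_apply, Module.End.mul_apply, hΨw, hw, map_sum,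
    sum_sub_distrib]

theorem lie_eq_of_lie_eq_ite (h : HasLocallyFiniteSum T Φ) {Ψ Y : Module.End R V} {κ : ℤ}
    (hT : ∀ k, ⁅T k, Ψ⁆ = if k = κ then Y else 0) : ⁅Φ, Ψ⁆ = Y := by
  ext w
  obtain ⟨F, hF, hκ⟩ := ((h.eventually_lie_apply_eq_sum Ψ w).and (eventually_ge_atTop {κ})).exists
  simp only [hF, hT, apply_ite (fun f : Module.End R V => f w), LinearMap.zero_apply,
    sum_ite_eq', singleton_subset_iff.1 hκ, if_true]

end HasLocallyFiniteSum

end LocallyFiniteSum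

section Phi

variable {K V : Type*} [Field K] [AddCommGroup V] [Module K V] {A A' : ℤ → Module.End K V}
  {φ : Module.End K V} {n : ℤ}

theorem IsWeylPair.lie_phi_a (hW : IsWeylPair A A')
    (hφ : HasLocallyFiniteSum (fun k => (-2 : K) • phiSummand A A' n k) φ) (m : ℤ) :
    ⁅φ, A m⁆ = (2 : K) • A (n + m) := by
  obtain ⟨κ, hκ⟩ := hW.exists_lie_phiSummand_a n m
  refine hφ.lie_eq_of_lie_eq_ite (κ := κ) fun k => ?_
  rw [smul_lie, hκ]
  split_ifs <;> simp

theorem IsWeylPair.lie_phi_a' (hW : IsWeylPair A A')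
    (hφ : HasLocallyFiniteSum (fun k => (-2 : K) • phiSummand A A' n k) φ) (m : ℤ) :
    ⁅φ, A' m⁆ = (-2 : K) • A' (n + m) := by
  obtain ⟨κ, hκ⟩ := hW.exists_lie_phiSummand_a' n m
  refine hφ.lie_eq_of_lie_eq_ite (κ := κ) fun k => ?_
  rw [smul_lie, hκ]
  split_ifs <;> simp

variable [NeZero (2 : K)]

theorem HasLocallyFiniteSum.eventually_cofinite_phiSummand_apply_eq_zero
    (hφ : HasLocallyFiniteSum (fun k => (-2 : K) • phiSummand A A' n k) φ) (w : V) :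
    ∀ᶠ k in cofinite, phiSummand A A' n k w = 0 := by
  filter_upwards [hφ.eventually_cofinite_apply_eq_zero w] with k hk
  simpa [two_ne_zero] using hk

theorem HasLocallyFiniteSum.eventually_atBot_a'_a_apply
    (hφ : HasLocallyFiniteSum (fun k => (-2 : K) • phiSummand A A' n k) φ) (w : V) :
    ∀ᶠ j in atBot, A' j (A (n - j) w) = 0 := by
  have h := hφ.eventually_cofinite_phiSummand_apply_eq_zero w
  rcases eq_or_ne n 0 with rfl | hn
  · filter_upwards [tendsto_neg_atBot_atTop.eventually (h.filter_mono atTop_le_cofinite),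
      eventually_le_atBot 0] with j hj hj₀
    simpa [phiSummand, show ¬ -j ≤ -1 by omega] using hj
  · filter_upwards [h.filter_mono atBot_le_cofinite] with j hj
    simpa [phiSummand, hn] using hj

theorem IsWeylPair.eventually_atTop_a'_a_apply (hW : IsWeylPair A A')
    (hφ : HasLocallyFiniteSum (fun k => (-2 : K) • phiSummand A A' n k) φ) (w : V) :
    ∀ᶠ j in atTop, A' j (A (n - j) w) = if n = 0 then -w else 0 := by
  have h := hφ.eventually_cofinite_phiSummand_apply_eq_zero w
  rcases eq_or_ne n 0 with rfl | hn
  · filter_upwards [tendsto_neg_atTop_atBot.eventually (h.filter_mono atBot_le_cofinite),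
      eventually_ge_atTop 1] with j hj hj₁
    have hweyl := LinearMap.congr_fun (hW.lie_a_a' (-j) j) w
    simp only [phiSummand, show -j ≤ -1 by omega, neg_neg, if_true] at hj
    simp only [Ring.lie_def, LinearMap.sub_apply, Module.End.mul_apply, hj, neg_add_cancel,
      if_true, Module.End.one_apply, zero_sub] at hweyl
    simpa using neg_eq_iff_eq_neg.1 hweyl
  · filter_upwards [h.filter_mono atTop_le_cofinite] with j hj
    simpa [phiSummand, hn] using hj

theorem IsWeylPair.lie_phi_phi_of_ne_zero (hW : IsWeylPair A A') {Φ : ℤ → Module.End K V}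
    (hΦ : ∀ n, HasLocallyFiniteSum (fun k => (-2 : K) • phiSummand A A' n k) (Φ n))
    (n : ℤ) {m : ℤ} (hm : m ≠ 0) :
    ⁅Φ n, Φ m⁆ = if n + m = 0 then ((-4 * n : ℤ) : K) • (1 : Module.End K V) else 0 := by
  have hsummand : ∀ k, ⁅(-2 : K) • phiSummand A A' m k, Φ n⁆ =
      (4 : K) • (A' k * A (n + m - k) - A' (k + n) * A (n + m - (k + n))) := fun k => by
    rw [show n + m - (k + n) = m - k by ring, add_comm k n, add_sub_assoc, phiSummand, if_neg hm,
      smul_lie, Ring.mul_lie, ← lie_skew, hW.lie_phi_a (hΦ n), ← lie_skew (A' k),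
      hW.lie_phi_a' (hΦ n)]
    simp only [mul_neg, mul_smul_comm, neg_mul, smul_mul_assoc, smul_add, smul_neg, smul_smul]
    module
  ext w
  set g : ℤ → V := fun j => A' j (A (n + m - j) w) with hg
  obtain ⟨M, hM, hshift⟩ := ((tendsto_Ico_neg_atTop_atTop.eventually
    ((hΦ m).eventually_lie_apply_eq_sum (Φ n) w)).and (eventually_sum_Ico_add_sub_sum_Ico
      ((hΦ (n + m)).eventually_atBot_a'_a_apply w) (hW.eventually_atTop_a'_a_apply (hΦ (n + m)) w)
      n)).exists
  calc ⁅Φ n, Φ m⁆ w = -∑ k ∈ Ico (-M) M, ⁅(-2 : K) • phiSummand A A' m k, Φ n⁆ w := by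
        rw [← lie_skew, LinearMap.neg_apply, hM]
    _ = (4 : K) • (∑ k ∈ Ico (-M) M, g (k + n) - ∑ k ∈ Ico (-M) M, g k) := by
        simp only [hsummand, hg, LinearMap.smul_apply, LinearMap.sub_apply, Module.End.mul_apply,
          ← smul_sum, sum_sub_distrib, ← smul_neg, neg_sub]
    _ = (4 : K) • (n • if n + m = 0 then -w else 0) := by rw [hshift]
    _ = _ := by split_ifs <;> simp [← Int.cast_smul_eq_zsmul K, smul_smul]

theorem IsWeylPair.lie_phi_phi (hW : IsWeylPair A A') {Φ : ℤ → Module.End K V}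
    (hΦ : ∀ n, HasLocallyFiniteSum (fun k => (-2 : K) • phiSummand A A' n k) (Φ n)) (n m : ℤ) :
    ⁅Φ n, Φ m⁆ = if n + m = 0 then ((-4 * n : ℤ) : K) • (1 : Module.End K V) else 0 := by
  rcases eq_or_ne m 0 with rfl | hm
  · rcases eq_or_ne n 0 with rfl | hn
    · simp
    · rw [← lie_skew, hW.lie_phi_phi_of_ne_zero hΦ 0 hn, if_neg (by simpa), if_neg (by simpa),
        neg_zero]
  · exact hW.lie_phi_phi_of_ne_zero hΦ n hm

end Phi

theorem stmt13_general
    {V : Type*} [AddCommGroup V] [Module ℂ V]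
    (A A' : ℤ → Module.End ℂ V)
    -- Weyl algebra relations
    (hAA' : ∀ n m : ℤ, A n * A' m - A' m * A n = if n + m = 0 then 1 else 0)
    (hAA : ∀ n m : ℤ, A n * A m = A m * A n)
    (hA'A' : ∀ n m : ℤ, A' n * A' m = A' m * A' n)
    -- the normally ordered quadratic operators φ(n), defined by locally finite sums
    (Φ : ℤ → Module.End ℂ V)
    (hΦ : ∀ n : ℤ, n ≠ 0 → ∀ w : V, ∃ N : ℕ, ∀ F : Finset ℤ,
      Finset.Icc (-(N : ℤ)) (N : ℤ) ⊆ F →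
        Φ n w = (-2 : ℂ) • ∑ k ∈ F, A' k (A (n - k) w))
    (hΦ0 : ∀ w : V, ∃ N : ℕ, ∀ F : Finset ℤ,
      Finset.Icc (-(N : ℤ)) (N : ℤ) ⊆ F →
        Φ 0 w = (-2 : ℂ) •
          ((∑ k ∈ F.filter (fun k => k ≤ -1), A k (A' (-k) w)) +
            ∑ k ∈ F.filter (fun k => 0 ≤ k), A' (-k) (A k w))) :
    (∀ n m : ℤ, Φ n * Φ m - Φ m * Φ n =
        if n + m = 0 then ((-4 * n : ℤ) : ℂ) • (1 : Module.End ℂ V) else 0) ∧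
    (∀ n m : ℤ, Φ n * A m - A m * Φ n = (2 : ℂ) • A (n + m)) := by
  have hW : IsWeylPair A A' := ⟨hAA', hAA, hA'A'⟩
  have hsum : ∀ n, HasLocallyFiniteSum (fun k => (-2 : ℂ) • phiSummand A A' n k) (Φ n) := by
    intro n w
    rcases eq_or_ne n 0 with rfl | hn
    · obtain ⟨N, hN⟩ := hΦ0 w
      filter_upwards [eventually_ge_atTop (Icc (-(N : ℤ)) N)] with F hF
      have hfilter : F.filter (fun k => 0 ≤ k) = F.filter (fun k => ¬ k ≤ -1) :=
        filter_congr fun k _ => by omega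
      rw [hN F hF, hfilter, ← sum_ite (fun k => A k (A' (-k) w)) (fun k => A' (-k) (A k w)),
        smul_sum]
      refine sum_congr rfl fun k _ => ?_
      simp only [phiSummand, if_true, LinearMap.smul_apply]
      split_ifs <;> rfl
    · obtain ⟨N, hN⟩ := hΦ n hn w
      filter_upwards [eventually_ge_atTop (Icc (-(N : ℤ)) N)] with F hF
      simp [hN F hF, phiSummand, hn, smul_sum]
  exact ⟨hW.lie_phi_phi hsum, fun n => hW.lie_phi_a (hsum n)⟩

/-- on the Weyl-algebra Whittaker module `M₁(λ,μ)` with `λ ≠ 0`, the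
normally ordered operators `φ(n) = −2 Σ_k a*(k) a(n−k)` (for `n ≠ 0`) and
`φ(0) = −2(Σ_{k≤−1} a(k)a*(−k) + Σ_{k≥0} a*(−k)a(k))` — which are well defined because
the sums act locally finitely — satisfy `[φ(n), φ(m)] = −4n δ_{n+m,0}` and
`[φ(n), a(m)] = 2 a(n+m)` as operators on `M₁(λ,μ)`. -/
theorem stmt13 (lam mu : ℂ) (hlam : lam ≠ 0)
    {V : Type*} [AddCommGroup V] [Module ℂ V]
    (A A' : ℤ → Module.End ℂ V) (v₁ : V)
    -- Weyl algebra relations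
    (hAA' : ∀ n m : ℤ, A n * A' m - A' m * A n = if n + m = 0 then 1 else 0)
    (hAA : ∀ n m : ℤ, A n * A m = A m * A n)
    (hA'A' : ∀ n m : ℤ, A' n * A' m = A' m * A' n)
    -- Whittaker generator of M₁(λ,μ)
    (hA0 : A 0 v₁ = lam • v₁) (hAn : ∀ n : ℤ, 1 ≤ n → A n v₁ = 0)
    (hA'1 : A' 1 v₁ = mu • v₁) (hA'm : ∀ m : ℤ, 2 ≤ m → A' m v₁ = 0)
    -- PBW basis of M₁(λ,μ)
    (hbasis_li : LinearIndependent ℂ (fun st : PartitionList × PartitionList =>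
      (((st.1.1.map fun k => A (-(k : ℤ))).prod *
        (st.2.1.map fun k => A' (1 - (k : ℤ))).prod) v₁)))
    (hbasis_span : Submodule.span ℂ (Set.range (fun st : PartitionList × PartitionList =>
      (((st.1.1.map fun k => A (-(k : ℤ))).prod *
        (st.2.1.map fun k => A' (1 - (k : ℤ))).prod) v₁))) = ⊤)
    -- the normally ordered quadratic operators φ(n), defined by locally finite sums
    (Φ : ℤ → Module.End ℂ V)
    (hΦ : ∀ n : ℤ, n ≠ 0 → ∀ w : V, ∃ N : ℕ, ∀ F : Finset ℤ,
      Finset.Icc (-(N : ℤ)) (N : ℤ) ⊆ F →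
        Φ n w = (-2 : ℂ) • ∑ k ∈ F, A' k (A (n - k) w))
    (hΦ0 : ∀ w : V, ∃ N : ℕ, ∀ F : Finset ℤ,
      Finset.Icc (-(N : ℤ)) (N : ℤ) ⊆ F →
        Φ 0 w = (-2 : ℂ) •
          ((∑ k ∈ F.filter (fun k => k ≤ -1), A k (A' (-k) w)) +
            ∑ k ∈ F.filter (fun k => 0 ≤ k), A' (-k) (A k w))) :
    (∀ n m : ℤ, Φ n * Φ m - Φ m * Φ n =
        if n + m = 0 then ((-4 * n : ℤ) : ℂ) • (1 : Module.End ℂ V) else 0) ∧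
    (∀ n m : ℤ, Φ n * A m - A m * Φ n = (2 : ℂ) • A (n + m)) :=
  stmt13_general A A' hAA' hAA hA'A' Φ hΦ hΦ0
end

section
/- Let s̃l₂ = sl₂ ⊗ ℂ[t,t⁻¹] ⊕ ℂc ⊕ ℂd be the extended affine Lie algebra of sl₂. The map σ defined on generators by σ(e(i)) = f(i+1), σ(f(i)) = e(i−1), σ(h(i)) = −h(i) + δ_{i,0}c, σ(c) = c, σ(d) = d + h(0)/2 extends to a Lie algebra automorphism of s̃l₂. -/
/-!
The images `f(i+1), e(i-1), -h(i) + δᵢ₀c, c, d + h(0)/2` satisfy the same bracket relations as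
`e(i), f(i), h(i), c, d`: the shift of the loop degree of `e` and `f` is compensated by the
`h(0)/2` added to `d`, and the central correction of `h(0)` accounts for the cocycle term of
`[f(i+1), e(-i-1)]`. Since `e, f, h, c, d` form a basis, the linear map they determine therefore
preserves all brackets. It is invertible: the inverse acts in the same way on `e, f, h, c` and
sends `d` to `d + h(0)/2 - c/2`.
-/

section

variable {L : Type*} [LieRing L] [LieAlgebra ℂ L]

structure AffineSl2Relations (e f h : ℤ → L) (c d : L) : Prop where
  lie_e_f : ∀ i j : ℤ, ⁅e i, f j⁆ = h (i + j) + (if i + j = 0 then (i : ℂ) • c else 0)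
  lie_h_e : ∀ i j : ℤ, ⁅h i, e j⁆ = (2 : ℂ) • e (i + j)
  lie_h_f : ∀ i j : ℤ, ⁅h i, f j⁆ = (-2 : ℂ) • f (i + j)
  lie_h_h : ∀ i j : ℤ, ⁅h i, h j⁆ = if i + j = 0 then ((2 * i : ℤ) : ℂ) • c else 0
  lie_e_e : ∀ i j : ℤ, ⁅e i, e j⁆ = 0
  lie_f_f : ∀ i j : ℤ, ⁅f i, f j⁆ = 0
  lie_d_e : ∀ n : ℤ, ⁅d, e n⁆ = (n : ℂ) • e n
  lie_d_f : ∀ n : ℤ, ⁅d, f n⁆ = (n : ℂ) • f n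
  lie_d_h : ∀ n : ℤ, ⁅d, h n⁆ = (n : ℂ) • h n
  c_lie : ∀ x : L, ⁅c, x⁆ = 0

def affineSl2Family (e f h : ℤ → L) (c d : L) : (ℤ × Fin 3) ⊕ Fin 2 → L :=
  Sum.elim (fun p => ![e p.1, f p.1, h p.1] p.2) ![c, d]

namespace AffineSl2Relations

variable {e f h : ℤ → L} {c d : L}

theorem lie_c (R : AffineSl2Relations e f h c d) (x : L) : ⁅x, c⁆ = 0 := by
  rw [← lie_skew, R.c_lie, neg_zero]

theorem lie_f_e (R : AffineSl2Relations e f h c d) (i j : ℤ) :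
    ⁅f i, e j⁆ = -(h (i + j) + if i + j = 0 then (j : ℂ) • c else 0) := by
  rw [← lie_skew, R.lie_e_f, add_comm j]

theorem lie_e_h (R : AffineSl2Relations e f h c d) (i j : ℤ) :
    ⁅e i, h j⁆ = (-2 : ℂ) • e (i + j) := by
  rw [← lie_skew, R.lie_h_e, add_comm j, neg_smul]

theorem lie_f_h (R : AffineSl2Relations e f h c d) (i j : ℤ) :
    ⁅f i, h j⁆ = (2 : ℂ) • f (i + j) := by
  rw [← lie_skew, R.lie_h_f, add_comm j, neg_smul, neg_neg]

theorem lie_e_d (R : AffineSl2Relations e f h c d) (n : ℤ) : ⁅e n, d⁆ = -((n : ℂ) • e n) := by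
  rw [← lie_skew, R.lie_d_e]

theorem lie_f_d (R : AffineSl2Relations e f h c d) (n : ℤ) : ⁅f n, d⁆ = -((n : ℂ) • f n) := by
  rw [← lie_skew, R.lie_d_f]

theorem lie_h_d (R : AffineSl2Relations e f h c d) (n : ℤ) : ⁅h n, d⁆ = -((n : ℂ) • h n) := by
  rw [← lie_skew, R.lie_d_h]

theorem ite_c_lie (R : AffineSl2Relations e f h c d) (p : Prop) [Decidable p] (x : L) :
    ⁅(if p then c else 0), x⁆ = 0 := by
  split_ifs <;> simp [R.c_lie]

theorem lie_ite_c (R : AffineSl2Relations e f h c d) (p : Prop) [Decidable p] (x : L) :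
    ⁅x, (if p then c else 0)⁆ = 0 := by
  split_ifs <;> simp [R.lie_c]

theorem twist (R : AffineSl2Relations e f h c d) :
    AffineSl2Relations (fun i => f (i + 1)) (fun i => e (i - 1))
      (fun i => -h i + if i = 0 then c else 0) c (d + (2⁻¹ : ℂ) • h 0) where
  lie_e_f i j := by
    rw [R.lie_f_e, show i + 1 + (j - 1) = i + j by ring]
    split_ifs with hij
    · rw [show j - 1 = -i - 1 by omega]; module
    · simp
  lie_h_e i j := by
    simp [R.ite_c_lie, R.lie_h_f, add_assoc]
  lie_h_f i j := by
    simp [R.ite_c_lie, R.lie_h_e, add_sub_assoc]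
  lie_h_h i j := by
    simp [R.ite_c_lie, R.lie_ite_c, R.lie_h_h]
  lie_e_e i j := R.lie_f_f _ _
  lie_f_f i j := R.lie_e_e _ _
  lie_d_e n := by
    simp [R.lie_d_f, R.lie_h_f]; module
  lie_d_f n := by
    simp [R.lie_d_e, R.lie_h_e]; module
  lie_d_h n := by
    rcases eq_or_ne n 0 with rfl | hn
    · simp [R.lie_c, R.lie_h_d]
    · simp [hn, R.lie_d_h, R.lie_h_h]
  c_lie := R.c_lie

variable {L' : Type*} [LieRing L'] [LieAlgebra ℂ L'] {e' f' h' : ℤ → L'} {c' d' : L'}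

theorem map_lie (R : AffineSl2Relations e f h c d) (R' : AffineSl2Relations e' f' h' c' d')
    (b : Module.Basis ((ℤ × Fin 3) ⊕ Fin 2) ℂ L) (hb : ⇑b = affineSl2Family e f h c d)
    (φ : L →ₗ[ℂ] L') (hφe : ∀ i, φ (e i) = e' i) (hφf : ∀ i, φ (f i) = f' i)
    (hφh : ∀ i, φ (h i) = h' i) (hφc : φ c = c') (hφd : φ d = d') (x y : L) :
    φ ⁅x, y⁆ = ⁅φ x, φ y⁆ := by
  let toEnd : L →ₗ[ℂ] L →ₗ[ℂ] L := LieModule.toEnd ℂ L L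
  let toEnd' : L' →ₗ[ℂ] L' →ₗ[ℂ] L' := LieModule.toEnd ℂ L' L'
  suffices toEnd.compr₂ φ = toEnd'.compl₁₂ φ φ from LinearMap.congr_fun₂ this x y
  refine LinearMap.ext_basis b b fun i j => ?_
  rcases i with ⟨i, k⟩ | k <;> rcases j with ⟨j, l⟩ | l <;> fin_cases k <;> fin_cases l <;>
    simp [toEnd, toEnd', hb, affineSl2Family, hφe, hφf, hφh, hφc, hφd, apply_ite φ,
      R.lie_e_f, R.lie_f_e, R.lie_h_e, R.lie_e_h, R.lie_h_f, R.lie_f_h, R.lie_h_h, R.lie_e_e,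
      R.lie_f_f, R.lie_d_e, R.lie_e_d, R.lie_d_f, R.lie_f_d, R.lie_d_h, R.lie_h_d, R.c_lie,
      R.lie_c, R'.lie_e_f, R'.lie_f_e, R'.lie_h_e, R'.lie_e_h, R'.lie_h_f, R'.lie_f_h,
      R'.lie_h_h, R'.lie_e_e, R'.lie_f_f, R'.lie_d_e, R'.lie_e_d, R'.lie_d_f, R'.lie_f_d,
      R'.lie_d_h, R'.lie_h_d, R'.c_lie, R'.lie_c]

end AffineSl2Relations

theorem ext_affineSl2Family {M : Type*} [AddCommGroup M] [Module ℂ M] {e f h : ℤ → L} {c d : L}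
    (b : Module.Basis ((ℤ × Fin 3) ⊕ Fin 2) ℂ L) (hb : ⇑b = affineSl2Family e f h c d)
    {φ ψ : L →ₗ[ℂ] M} (he : ∀ i, φ (e i) = ψ (e i)) (hf : ∀ i, φ (f i) = ψ (f i))
    (hh : ∀ i, φ (h i) = ψ (h i)) (hc : φ c = ψ c) (hd : φ d = ψ d) : φ = ψ := by
  refine b.ext fun i => ?_
  rcases i with ⟨i, k⟩ | k <;> fin_cases k <;> simp [hb, affineSl2Family, he, hf, hh, hc, hd]

theorem exists_linearMap_affineSl2Family {M : Type*} [AddCommGroup M] [Module ℂ M]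
    {e f h : ℤ → L} {c d : L}
    (b : Module.Basis ((ℤ × Fin 3) ⊕ Fin 2) ℂ L) (hb : ⇑b = affineSl2Family e f h c d)
    (e' f' h' : ℤ → M) (c' d' : M) :
    ∃ φ : L →ₗ[ℂ] M, (∀ i, φ (e i) = e' i) ∧ (∀ i, φ (f i) = f' i) ∧
      (∀ i, φ (h i) = h' i) ∧ φ c = c' ∧ φ d = d' := by
  have hφ := b.constr_basis ℂ (affineSl2Family e' f' h' c' d')
  simp only [hb] at hφ
  exact ⟨b.constr ℂ (affineSl2Family e' f' h' c' d'), fun i => hφ (.inl (i, 0)),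
    fun i => hφ (.inl (i, 1)), fun i => hφ (.inl (i, 2)), hφ (.inr 0), hφ (.inr 1)⟩

theorem exists_linearEquiv_twist {e f h : ℤ → L} {c d : L}
    (b : Module.Basis ((ℤ × Fin 3) ⊕ Fin 2) ℂ L) (hb : ⇑b = affineSl2Family e f h c d) :
    ∃ S : L ≃ₗ[ℂ] L, (∀ i, S (e i) = f (i + 1)) ∧ (∀ i, S (f i) = e (i - 1)) ∧
      (∀ i, S (h i) = -h i + if i = 0 then c else 0) ∧ S c = c ∧
      S d = d + (2⁻¹ : ℂ) • h 0 := by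
  obtain ⟨φ, hφe, hφf, hφh, hφc, hφd⟩ := exists_linearMap_affineSl2Family b hb
    (fun i => f (i + 1)) (fun i => e (i - 1)) (fun i => -h i + if i = 0 then c else 0) c
    (d + (2⁻¹ : ℂ) • h 0)
  obtain ⟨ψ, hψe, hψf, hψh, hψc, hψd⟩ := exists_linearMap_affineSl2Family b hb
    (fun i => f (i + 1)) (fun i => e (i - 1)) (fun i => -h i + if i = 0 then c else 0) c
    (d + (2⁻¹ : ℂ) • h 0 - (2⁻¹ : ℂ) • c)
  refine ⟨.ofLinearMap φ ψ ?_ ?_, hφe, hφf, hφh, hφc, hφd⟩ <;>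
    refine ext_affineSl2Family b hb (fun i => ?_) (fun i => ?_) (fun i => ?_) ?_ ?_ <;>
    simp [hφe, hφf, hφh, hφc, hφd, hψe, hψf, hψh, hψc, hψd, apply_ite φ, apply_ite ψ]

end

/-- the assignment `σ(e(i)) = f(i+1)`, `σ(f(i)) = e(i−1)`,
`σ(h(i)) = −h(i) + δ_{i,0}c`, `σ(c) = c`, `σ(d) = d + h(0)/2` extends to a Lie algebra
automorphism of the extended affine Lie algebra `s̃l₂`, presented here as a complex Lie
algebra `L` with basis `{e(i), f(i), h(i) : i ∈ ℤ} ∪ {c, d}` and the standard affine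
brackets. -/
theorem stmt15 {L : Type*} [LieRing L] [LieAlgebra ℂ L]
    (e f h : ℤ → L) (c d : L)
    (bb : Module.Basis ((ℤ × Fin 3) ⊕ Fin 2) ℂ L)
    (hbe : ∀ i : ℤ, e i = bb (Sum.inl (i, 0)))
    (hbf : ∀ i : ℤ, f i = bb (Sum.inl (i, 1)))
    (hbh : ∀ i : ℤ, h i = bb (Sum.inl (i, 2)))
    (hbc : c = bb (Sum.inr 0)) (hbd : d = bb (Sum.inr 1))
    (hef : ∀ i j : ℤ, ⁅e i, f j⁆ = h (i + j) + (if i + j = 0 then (i : ℂ) • c else 0))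
    (hhe : ∀ i j : ℤ, ⁅h i, e j⁆ = (2 : ℂ) • e (i + j))
    (hhf : ∀ i j : ℤ, ⁅h i, f j⁆ = (-2 : ℂ) • f (i + j))
    (hhh : ∀ i j : ℤ, ⁅h i, h j⁆ = if i + j = 0 then ((2 * i : ℤ) : ℂ) • c else 0)
    (hee : ∀ i j : ℤ, ⁅e i, e j⁆ = 0)
    (hff : ∀ i j : ℤ, ⁅f i, f j⁆ = 0)
    (hde : ∀ n : ℤ, ⁅d, e n⁆ = (n : ℂ) • e n)
    (hdf : ∀ n : ℤ, ⁅d, f n⁆ = (n : ℂ) • f n)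
    (hdh : ∀ n : ℤ, ⁅d, h n⁆ = (n : ℂ) • h n)
    (hc : ∀ x : L, ⁅c, x⁆ = 0) :
    ∃ σ : L ≃ₗ⁅ℂ⁆ L,
      (∀ i : ℤ, σ (e i) = f (i + 1)) ∧
      (∀ i : ℤ, σ (f i) = e (i - 1)) ∧
      (∀ i : ℤ, σ (h i) = -h i + (if i = 0 then c else 0)) ∧
      σ c = c ∧
      σ d = d + (2⁻¹ : ℂ) • h 0 := by
  have R : AffineSl2Relations e f h c d := ⟨hef, hhe, hhf, hhh, hee, hff, hde, hdf, hdh, hc⟩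
  have hb : ⇑bb = affineSl2Family e f h c d := by
    funext i
    rcases i with ⟨i, k⟩ | k <;> fin_cases k <;> simp [affineSl2Family, hbe, hbf, hbh, hbc, hbd]
  obtain ⟨S, hSe, hSf, hSh, hSc, hSd⟩ := exists_linearEquiv_twist bb hb
  have hS := R.map_lie R.twist bb hb S.toLinearMap hSe hSf hSh hSc hSd
  exact ⟨{ S with map_lie' := hS _ _ }, hSe, hSf, hSh, hSc, hSd⟩
end

section
/- Let s be a nonempty set of negative integers, r the positive generator of the subgroup of ℤ generated by s, and χ : s ∪ {0} → ℂ* a function. Let H₋ be the Lie algebra with basis {d, T(n) : n ≤ 0}, [T(i),T(j)] = 0, [d,T(i)] = iT(i), and b = ℂh + ℂe with [h,e] = 2e. Define φ : H₋ → U(b) by φ(d) = −(r/2)h, φ(T(i)) = 0 for i ∉ s ∪ {0}, and φ(T(i)) = χ(i)e^{−i/r} for i ∈ s ∪ {0}. Then φ is a Lie algebra homomorphism from H₋ to U(b) (with commutator bracket), i.e., φ([x,y]) = [φ(x),φ(y)] for all x, y ∈ H₋. -/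
open scoped Classical

attribute [local instance 100] LieRing.ofAssociativeRing

/-!
Every `φ(T(i))` is a scalar multiple of a power of `e`, so these images commute. For the second
family of brackets, `ad h` acts on `e ^ k` by `2k` (it is a derivation with `[h, e] = 2e`), and
`r ∣ i` for `i ∈ s ∪ {0}` makes `k = -i/r` exact, so
`[-(r/2) h, e ^ k] = -r k e ^ k = i e ^ k`.
-/

section Commutator

variable {R A : Type*} [CommRing R] [Ring A] [Algebra R A]

theorem mul_pow_sub_pow_mul_of_mul_sub_mul {x y : A} {t : R} (hxy : x * y - y * x = t • y)
    (k : ℕ) : x * y ^ k - y ^ k * x = ((k : R) * t) • y ^ k := by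
  induction k with
  | zero => simp
  | succ n ih =>
    calc x * y ^ (n + 1) - y ^ (n + 1) * x
        = (x * y ^ n - y ^ n * x) * y + y ^ n * (x * y - y * x) := by noncomm_ring
      _ = ((n + 1 : ℕ) * t) • y ^ (n + 1) := by
        rw [ih, hxy, smul_mul_assoc, mul_smul_comm, ← pow_succ, ← add_smul]
        push_cast
        ring_nf

theorem smul_mul_smul_pow_sub {x y : A} {t : R} (hxy : x * y - y * x = t • y) (a c : R)
    (k : ℕ) :
    (a • x) * (c • y ^ k) - (c • y ^ k) * (a • x) = (a * c * ((k : R) * t)) • y ^ k := by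
  rw [smul_mul_smul_comm, smul_mul_smul_comm, mul_comm c, ← smul_sub,
    mul_pow_sub_pow_mul_of_mul_sub_mul hxy, smul_smul]

end Commutator

theorem UniversalEnvelopingAlgebra.ι_mul_sub_ι_mul {R L : Type*} [CommRing R] [LieRing L]
    [LieAlgebra R L] (x y : L) :
    ι R x * ι R y - ι R y * ι R x = ι R ⁅x, y⁆ := by
  rw [LieHom.map_lie, Ring.lie_def]

theorem Int.dvd_of_mem_of_closure_eq_zmultiples {s : Set ℤ} {r i : ℤ}
    (hgen : AddSubgroup.closure s = AddSubgroup.zmultiples r) (hi : i ∈ s ∪ {0}) : r ∣ i := by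
  rw [← Int.mem_zmultiples_iff, ← hgen]
  rcases hi with hi | rfl
  · exact AddSubgroup.subset_closure hi
  · exact zero_mem _

theorem stmt18_general {b : Type*} [LieRing b] [LieAlgebra ℂ b]
    (h e : b) (hhe : ⁅h, e⁆ = (2 : ℂ) • e)
    (s : Set ℤ)
    (r : ℤ) (hr : 0 < r)
    (hgen : AddSubgroup.closure s = AddSubgroup.zmultiples r)
    (χ : ℤ → ℂ) :
    let ι : b →ₗ⁅ℂ⁆ UniversalEnvelopingAlgebra ℂ b := UniversalEnvelopingAlgebra.ι ℂ
    let Φd : UniversalEnvelopingAlgebra ℂ b := (-(r : ℂ) / 2) • ι h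
    let ΦT : ℤ → UniversalEnvelopingAlgebra ℂ b := fun i =>
      if i ∈ s ∪ {0} then χ i • (ι e) ^ ((-i) / r).toNat else 0
    (∀ i j : ℤ, i ≤ 0 → j ≤ 0 → ΦT i * ΦT j = ΦT j * ΦT i) ∧
    (∀ i : ℤ, i ≤ 0 → Φd * ΦT i - ΦT i * Φd = (i : ℂ) • ΦT i) := by
  intro ι Φd ΦT
  have hΦT : ∀ i, ∃ (c : ℂ) (n : ℕ), ΦT i = c • ι e ^ n := fun i => by
    by_cases hi : i ∈ s ∪ {0}
    · exact ⟨χ i, _, if_pos hi⟩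
    · exact ⟨0, 0, by rw [zero_smul]; exact if_neg hi⟩
  refine ⟨fun i j _ _ => ?_, fun i hi0 => ?_⟩
  · obtain ⟨c, m, hc⟩ := hΦT i
    obtain ⟨d, n, hd⟩ := hΦT j
    rw [hc, hd]
    exact (((Commute.pow_pow_self (ι e) m n).smul_left c).smul_right d).eq
  · by_cases hi : i ∈ s ∪ {0}
    · have hrk : (r : ℂ) * ((-i / r).toNat : ℕ) = -i := by
        rw [← Int.cast_natCast, Int.toNat_of_nonneg (Int.ediv_nonneg (by omega) hr.le),
          ← Int.cast_mul,
          Int.mul_ediv_cancel' (dvd_neg.mpr (Int.dvd_of_mem_of_closure_eq_zmultiples hgen hi)),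
          Int.cast_neg]
      have hbr : ι h * ι e - ι e * ι h = (2 : ℂ) • ι e := by
        rw [UniversalEnvelopingAlgebra.ι_mul_sub_ι_mul, hhe, map_smul]
      simp only [Φd, ΦT, if_pos hi, smul_mul_smul_pow_sub hbr, smul_smul]
      congr 1
      linear_combination (-χ i) * hrk
    · simp only [ΦT, if_neg hi, mul_zero, zero_mul, sub_zero, smul_zero]

/-- the map `φ : H₋ → U(b)` with `φ(d) = −(r/2)h`,
`φ(T(i)) = χ(i) e^{−i/r}` for `i ∈ s ∪ {0}` and `φ(T(i)) = 0` otherwise is a Lie algebra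
homomorphism, i.e. it preserves the defining brackets `[T(i),T(j)] = 0` and
`[d,T(i)] = iT(i)` of `H₋` inside `U(b)` with the commutator bracket. -/
theorem stmt18 {b : Type*} [LieRing b] [LieAlgebra ℂ b]
    (h e : b) (hhe : ⁅h, e⁆ = (2 : ℂ) • e)
    (s : Set ℤ) (hs : s.Nonempty) (hneg : ∀ i ∈ s, i < 0)
    (r : ℤ) (hr : 0 < r)
    (hgen : AddSubgroup.closure s = AddSubgroup.zmultiples r)
    (χ : ℤ → ℂ) (hχ : ∀ i ∈ s ∪ {0}, χ i ≠ 0) :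
    let ι : b →ₗ⁅ℂ⁆ UniversalEnvelopingAlgebra ℂ b := UniversalEnvelopingAlgebra.ι ℂ
    let Φd : UniversalEnvelopingAlgebra ℂ b := (-(r : ℂ) / 2) • ι h
    let ΦT : ℤ → UniversalEnvelopingAlgebra ℂ b := fun i =>
      if i ∈ s ∪ {0} then χ i • (ι e) ^ ((-i) / r).toNat else 0
    (∀ i j : ℤ, i ≤ 0 → j ≤ 0 → ΦT i * ΦT j = ΦT j * ΦT i) ∧
    (∀ i : ℤ, i ≤ 0 → Φd * ΦT i - ΦT i * Φd = (i : ℂ) • ΦT i) :=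
  stmt18_general h e hhe s r hr hgen χ
end

section
/- Let b = ℂh + ℂe with [h,e] = 2e, s ⊆ ℤ_{<0} nonempty generating rℤ, χ : s ∪ {0} → ℂ*, and φ : H₋ → U(b) the homomorphism with φ(d) = −(r/2)h, φ(T(i)) = χ(i)e^{−i/r} for i ∈ s ∪ {0}, φ(T(i)) = 0 otherwise. For a b-module M, let M^φ be the H₋-module with x·v = φ(x)v. Then M^φ is a simple H₋-module if and only if M is a simple b-module. -/
open scoped Classical

/-!
A `b`-submodule is stable under `φ(H₋)`, so one direction is immediate. Conversely, a
`φ(H₋)`-stable subspace `W` is stable under `h` (as `r ≠ 0`) and under `e ^ n` for all `n` in the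
monoid generated by the exponents `-i / r`, `i ∈ s`. These have gcd `1` because `s` generates `rℤ`,
so `W` is stable under `e ^ m` for all `m ≥ m₀`. Since `e ^ m h = (h - 2m) e ^ m`, for `0 ≠ w ∈ W`
the subspace `{v | e ^ m v ∈ W for all m ≥ m₀}` is a `b`-submodule containing `w`, hence all of
`M`. Unless `e = 0`, `e` is surjective (its range is a `b`-submodule), and applying `e ^ m₀`
gives `W = M`.
-/

namespace Submodule

variable {R M : Type*} [Semiring R] [AddCommMonoid M] [Module R M]

def powStabilizer (W : Submodule R M) (f : Module.End R M) : AddSubmonoid ℕ where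
  carrier := {n | ∀ v ∈ W, (f ^ n) v ∈ W}
  zero_mem' := by simp
  add_mem' {m n} hm hn v hv := by
    rw [pow_add, Module.End.mul_apply]
    exact hm _ (hn v hv)

lemma powStabilizer_eq_top {W : Submodule R M} {f : Module.End R M}
    (hf : ∀ v ∈ W, f v ∈ W) : W.powStabilizer f = ⊤ := by
  rw [eq_top_iff, ← Nat.addSubmonoidClosure_one, AddSubmonoid.closure_le,
    Set.singleton_subset_iff]
  simpa [powStabilizer] using hf

end Submodule

lemma Nat.setGcd_image_toNat_neg_ediv_eq_one {s : Set ℤ} {r : ℤ} (hr : 0 < r)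
    (hs : ∀ i ∈ s, i ≤ 0) (hgen : AddSubgroup.closure s = AddSubgroup.zmultiples r) :
    Nat.setGcd ((fun i ↦ ((-i) / r).toNat) '' s) = 1 := by
  set g := Nat.setGcd ((fun i ↦ ((-i) / r).toNat) '' s)
  have hdvd : ∀ i ∈ s, r * g ∣ i := by
    intro i hi
    obtain ⟨k, rfl⟩ : r ∣ i :=
      Int.mem_zmultiples_iff.mp (hgen ▸ AddSubgroup.subset_closure hi)
    have hk : k ≤ 0 := nonpos_of_mul_nonpos_right (hs _ hi) hr
    have hg : (g : ℤ) ∣ -k := by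
      have := Nat.setGcd_dvd_of_mem (Set.mem_image_of_mem (fun i ↦ ((-i) / r).toNat) hi)
      rwa [← mul_neg, Int.mul_ediv_cancel_left _ hr.ne', ← Int.natCast_dvd_natCast,
        Int.toNat_of_nonneg (by omega)] at this
    simpa using mul_dvd_mul_left r hg
  have hr_mem : r ∈ AddSubgroup.zmultiples (r * g) :=
    (AddSubgroup.closure_le _).mpr (fun i hi ↦ Int.mem_zmultiples_iff.mpr (hdvd i hi))
      (hgen ▸ AddSubgroup.mem_zmultiples r)
  have : (g : ℤ) ∣ 1 := by
    rw [← mul_dvd_mul_iff_left hr.ne', mul_one]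
    exact Int.mem_zmultiples_iff.mp hr_mem
  exact Nat.dvd_one.mp (Int.natCast_dvd_natCast.mp this)

section RaisingOperator

variable {R M : Type*} [CommRing R] [AddCommGroup M] [Module R M] {H E : Module.End R M} {c : R}

lemma semiconjBy_sub_smul_one_of_commutator_eq (hrel : H * E - E * H = c • E) (t : R) :
    SemiconjBy E (H - t • 1) (H - (t + c) • 1) := by
  rw [SemiconjBy, mul_sub, sub_mul, mul_smul_comm, smul_mul_assoc, mul_one, one_mul, add_smul,
    ← hrel]
  abel

lemma semiconjBy_pow_of_commutator_eq (hrel : H * E - E * H = c • E) (n : ℕ) :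
    SemiconjBy (E ^ n) H (H - (n * c) • 1) := by
  induction n with
  | zero => simp
  | succ n ih =>
    rw [pow_succ', Nat.cast_succ, add_one_mul]
    exact (semiconjBy_sub_smul_one_of_commutator_eq hrel _).mul_left ih

lemma surjective_of_commutator_eq_of_forall_invariant (hrel : H * E - E * H = c • E)
    (hsimple : ∀ W : Submodule R M, (∀ v ∈ W, H v ∈ W) → (∀ v ∈ W, E v ∈ W) → W = ⊥ ∨ W = ⊤)
    (hE : E ≠ 0) : Function.Surjective E := by
  have hH : ∀ v ∈ LinearMap.range E, H v ∈ LinearMap.range E := by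
    rintro _ ⟨x, rfl⟩
    have := congr($(semiconjBy_sub_smul_one_of_commutator_eq hrel (-c)) x)
    simp only [neg_add_cancel, zero_smul, sub_zero] at this
    exact ⟨_, this⟩
  rcases hsimple _ hH fun v _ ↦ LinearMap.mem_range_self E v with h | h
  · exact absurd (LinearMap.range_eq_bot.mp h) hE
  · exact LinearMap.range_eq_top.mp h

lemma eq_bot_or_eq_top_of_forall_ge_mem_powStabilizer (hrel : H * E - E * H = c • E)
    (hsimple : ∀ W : Submodule R M, (∀ v ∈ W, H v ∈ W) → (∀ v ∈ W, E v ∈ W) → W = ⊥ ∨ W = ⊤)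
    {W : Submodule R M} (hH : ∀ v ∈ W, H v ∈ W) {m₀ : ℕ}
    (hW : ∀ m ≥ m₀, m ∈ W.powStabilizer E) : W = ⊥ ∨ W = ⊤ := by
  by_cases hE : E = 0
  · exact hsimple W hH fun v _ ↦ by simp [hE]
  refine or_iff_not_imp_left.mpr fun hbot ↦ ?_
  obtain ⟨w, hwW, hw0⟩ := W.ne_bot_iff.mp hbot
  let U : Submodule R M := ⨅ (m : ℕ) (_ : m₀ ≤ m), W.comap (E ^ m)
  have mem_U {v : M} : v ∈ U ↔ ∀ m ≥ m₀, (E ^ m) v ∈ W := by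
    simp only [U, Submodule.mem_iInf, Submodule.mem_comap]
  have hU_H : ∀ v ∈ U, H v ∈ U := by
    refine fun v hv ↦ mem_U.mpr fun m hm ↦ ?_
    rw [← Module.End.mul_apply, (semiconjBy_pow_of_commutator_eq hrel m).eq,
      Module.End.mul_apply]
    exact W.sub_mem (hH _ (mem_U.mp hv m hm)) (W.smul_mem _ (mem_U.mp hv m hm))
  have hU_E : ∀ v ∈ U, E v ∈ U := fun v hv ↦ mem_U.mpr fun m hm ↦ by
    simpa [← Module.End.mul_apply, ← pow_succ] using mem_U.mp hv (m + 1) (by omega)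
  have hU : U = ⊤ := (hsimple U hU_H hU_E).resolve_left fun h ↦
    hw0 <| (Submodule.mem_bot R).mp <| h ▸ mem_U.mpr fun m hm ↦ hW m hm w hwW
  refine eq_top_iff.mpr fun u _ ↦ ?_
  obtain ⟨v, rfl⟩ := (Module.End.coe_pow E m₀ ▸
    (surjective_of_commutator_eq_of_forall_invariant hrel hsimple hE).iterate m₀) u
  exact mem_U.mp (hU ▸ Submodule.mem_top) m₀ le_rfl

end RaisingOperator

theorem stmt19_general {M : Type*} [AddCommGroup M] [Module ℂ M]
    (Hop Eop : Module.End ℂ M)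
    (hrel : Hop * Eop - Eop * Hop = (2 : ℂ) • Eop)
    (s : Set ℤ) (hneg : ∀ i ∈ s, i < 0)
    (r : ℤ) (hr : 0 < r)
    (hgen : AddSubgroup.closure s = AddSubgroup.zmultiples r)
    (χ : ℤ → ℂ) (hχ : ∀ i ∈ s ∪ {0}, χ i ≠ 0) :
    (∀ W : Submodule ℂ M,
        (∀ v ∈ W, ((-(r : ℂ) / 2) • Hop) v ∈ W) →
        (∀ i : ℤ, i ≤ 0 → ∀ v ∈ W,
          (if i ∈ s ∪ {0} then χ i • Eop ^ ((-i) / r).toNat else 0) v ∈ W) →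
        W = ⊥ ∨ W = ⊤) ↔
      (∀ W : Submodule ℂ M,
        (∀ v ∈ W, Hop v ∈ W) → (∀ v ∈ W, Eop v ∈ W) → W = ⊥ ∨ W = ⊤) := by
  constructor
  · intro hφ W hH hE
    refine hφ W (fun v hv ↦ W.smul_mem _ (hH v hv)) fun i _ v hv ↦ ?_
    split_ifs
    · exact W.smul_mem _ ((Submodule.powStabilizer_eq_top hE).ge (AddSubmonoid.mem_top _) v hv)
    · exact W.zero_mem
  · intro hsimple W hd hT
    have hH : ∀ v ∈ W, Hop v ∈ W := fun v hv ↦ by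
      have hr0 : (r : ℂ) ≠ 0 := by exact_mod_cast hr.ne'
      simpa [smul_smul, hr0] using W.smul_mem (-(r : ℂ) / 2)⁻¹ (hd v hv)
    have hN : (fun i ↦ ((-i) / r).toNat) '' s ⊆ W.powStabilizer Eop := by
      rintro _ ⟨i, hi, rfl⟩ v hv
      have hi' : i ∈ s ∪ {0} := Set.mem_union_left _ hi
      have := hT i (hneg i hi).le v hv
      rw [if_pos hi'] at this
      simpa [hχ i hi'] using W.smul_mem (χ i)⁻¹ this
    have hgcd := Nat.setGcd_image_toNat_neg_ediv_eq_one hr (fun i hi ↦ (hneg i hi).le) hgen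
    obtain ⟨m₀, hm₀⟩ := Nat.exists_mem_closure_of_ge ((fun i ↦ ((-i) / r).toNat) '' s)
    exact eq_bot_or_eq_top_of_forall_ge_mem_powStabilizer hrel hsimple hH fun m hm ↦
      AddSubmonoid.closure_le.mpr hN (hm₀ m hm (hgcd ▸ one_dvd m))

/-- for a `b`-module `M` (operators `Hop`, `Eop` with
`[Hop, Eop] = 2 Eop`), the `H₋`-module `M^φ` obtained by pulling back along
`φ(d) = −(r/2)h`, `φ(T(i)) = χ(i) e^{−i/r}` for `i ∈ s ∪ {0}` (and `0` otherwise)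
is simple if and only if `M` is a simple `b`-module. -/
theorem stmt19 {M : Type*} [AddCommGroup M] [Module ℂ M] [Nontrivial M]
    (Hop Eop : Module.End ℂ M)
    (hrel : Hop * Eop - Eop * Hop = (2 : ℂ) • Eop)
    (s : Set ℤ) (hs : s.Nonempty) (hneg : ∀ i ∈ s, i < 0)
    (r : ℤ) (hr : 0 < r)
    (hgen : AddSubgroup.closure s = AddSubgroup.zmultiples r)
    (χ : ℤ → ℂ) (hχ : ∀ i ∈ s ∪ {0}, χ i ≠ 0) :
    (∀ W : Submodule ℂ M,
        (∀ v ∈ W, ((-(r : ℂ) / 2) • Hop) v ∈ W) →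
        (∀ i : ℤ, i ≤ 0 → ∀ v ∈ W,
          (if i ∈ s ∪ {0} then χ i • Eop ^ ((-i) / r).toNat else 0) v ∈ W) →
        W = ⊥ ∨ W = ⊤) ↔
      (∀ W : Submodule ℂ M,
        (∀ v ∈ W, Hop v ∈ W) → (∀ v ∈ W, Eop v ∈ W) → W = ⊥ ∨ W = ⊤) :=
  stmt19_general Hop Eop hrel s hneg r hr hgen χ hχ
end
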